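/- arXiv:math/0303098 — 4 statements merged into one kernel-verified Lean document; each statement's English description precedes it below -/
import Mathlib

section
/- Let B⊆V be linearly independent with Ω(b,b)=0 for all b∈B and Gr(B) connected. Suppose B is the disjoint union of subsets B₁,…,B_r such that each Gr(B_i) is connected, the restriction of Ω to span(B_i) is alternating, and for b∈B_i, b'∈B_j with i≠j one has Ω(b,b')=1 if and only if j=i+1. Let x∈V be a vector not fixed by Γ_B, set L = min{j : Γ_{B_j} does not fix x}, and assume x∈span(B_L∪B_{L+1}∪⋯∪B_r). Let π_L(x)∈span(B_L) be the component of x in the direct-sum decomposition span(B_L∪⋯∪B_r) = span(B_L) ⊕ span(B_{L+1}∪⋯∪B_r). Then the Γ_B-orbit of x equals {z+w : z lies in the Γ_{B_L}-orbit of π_L(x) and w∈span(B_{L+1}∪⋯∪B_r)}. -/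
open scoped BigOperators

/-- A `ZMod 2`-valued bilinear form on `V`. -/
abbrev BForm (V : Type*) [AddCommGroup V] [Module (ZMod 2) V] :=
  V →ₗ[ZMod 2] V →ₗ[ZMod 2] ZMod 2

variable {V : Type*} [AddCommGroup V] [Module (ZMod 2) V]

/-- `g` is the transvection `τ_b : x ↦ x + Ω(x,b)·b` for some `b ∈ B`. -/
def IsTransvection (Ω : BForm V) (B : Set V) (g : V ≃ₗ[ZMod 2] V) : Prop :=
  ∃ b ∈ B, ∀ x : V, g x = x + Ω x b • b

/-- The group `Γ_B` generated by the transvections `τ_b`, `b ∈ B`. -/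
def Gamma (Ω : BForm V) (B : Set V) : Subgroup (V ≃ₗ[ZMod 2] V) :=
  Subgroup.closure {g | IsTransvection Ω B g}

/-- `x` and `y` lie in the same `Γ_B`-orbit. -/
def SameOrbit (Ω : BForm V) (B : Set V) (x y : V) : Prop :=
  ∃ g ∈ Gamma Ω B, g x = y

/-- The graph `Gr(X)` on vertex set `X`, with `b, b'` adjacent iff `Ω(b,b') = 1` or `Ω(b',b) = 1`. -/
def Gr (Ω : BForm V) (X : Set V) : SimpleGraph X :=
  SimpleGraph.fromRel fun a b => Ω a.1 b.1 = 1

/-- One basic move: `B' = φ_{c,a}(B)`, replacing `c` by `c + a`. -/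
def MoveRel (Ω : BForm V) (B B' : Set V) : Prop :=
  ∃ a c, a ∈ B ∧ c ∈ B ∧ a ≠ c ∧ Ω a c = 1 ∧ B' = insert (c + a) (B \ {c})

/-- `B` and `B'` are equivalent: related by a finite sequence of basic moves. -/
def EquivSets (Ω : BForm V) : Set V → Set V → Prop :=
  Relation.ReflTransGen (MoveRel Ω)

/-- The kernel `V₀` of the form `Ω`. -/
def V0set (Ω : BForm V) : Set V := {x | ∀ v : V, Ω x v = 0}

/-- `Δ`, the `Γ_B`-orbit containing `B` (when `Gr(B)` is connected). -/
def Delta (Ω : BForm V) (B : Set V) : Set V :=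
  {x | ∃ b ∈ B, SameOrbit Ω B b x}

/-- `V₀₀₀`: vectors of `V₀` of the form `x₁ + x₂` with `x₁, x₂ ∈ Δ`. -/
def V000set (Ω : BForm V) (B : Set V) : Set V :=
  {y | y ∈ V0set Ω ∧ ∃ x₁ ∈ Delta Ω B, ∃ x₂ ∈ Delta Ω B, y = x₁ + x₂}

/-- `U₀₀₀` for `U = span(B)`: vectors of `U₀` of the form `x₁ + x₂` with `x₁, x₂ ∈ Δ`. -/
def U000set (Ω : BForm V) (B : Set V) : Set V :=
  {y | y ∈ Submodule.span (ZMod 2) B ∧ (∀ u ∈ Submodule.span (ZMod 2) B, Ω y u = 0) ∧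
    ∃ x₁ ∈ Delta Ω B, ∃ x₂ ∈ Delta Ω B, y = x₁ + x₂}

/-- `x = x₁ + ⋯ + x_s` with all `x_i ∈ Δ` and `Ω(x_i, x_j) = 0`: a `Δ`-decomposition. -/
def HasDeltaDecomp (Ω : BForm V) (B : Set V) (x : V) (s : ℕ) : Prop :=
  1 ≤ s ∧ ∃ f : Fin s → V, (∀ i, f i ∈ Delta Ω B) ∧
    (∀ i j, i ≠ j → Ω (f i) (f j) = 0) ∧ x = ∑ i, f i

/-- `d(x)`: minimal length of a `Δ`-decomposition of `x`. -/
noncomputable def dval (Ω : BForm V) (B : Set V) (x : V) : ℕ :=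
  sInf {s | HasDeltaDecomp Ω B x s}

/-- `Q` is the quadratic form associated with `Ω` and `S` (`Q(b)=1` on `S`, polarization `Ω`). -/
def IsQuadForm (Ω : BForm V) (S : Set V) (Q : V → ZMod 2) : Prop :=
  (∀ b ∈ S, Q b = 1) ∧ ∀ u v : V, Q (u + v) = Q u + Q v + Ω u v

/-- The tree of type `D_{m,k}`: path `a₁ — ⋯ — a_m` with leaves `c₁, …, c_k` attached to `a_m`. -/
def DmkGraph (m k : ℕ) : SimpleGraph (Fin m ⊕ Fin k) :=
  SimpleGraph.fromRel fun x y =>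
    match x, y with
    | Sum.inl i, Sum.inl j => i.val + 1 = j.val
    | Sum.inl i, Sum.inr _ => i.val + 1 = m
    | _, _ => False

/-- The Dynkin tree `E₆`. -/
def E6Graph : SimpleGraph (Fin 6) :=
  SimpleGraph.fromRel fun i j => (i.val, j.val) ∈ [(0,1),(1,2),(2,3),(3,4),(2,5)]

/-- Two triangles sharing a common edge: four vertices, five edges. -/
def TwoTrianglesGraph : SimpleGraph (Fin 4) :=
  SimpleGraph.fromRel fun i j => (i.val, j.val) ∈ [(0,1),(0,2),(0,3),(1,2),(1,3)]

/-- The cycle of length `n`. -/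
def CycleGraph (n : ℕ) : SimpleGraph (Fin n) :=
  SimpleGraph.fromRel fun i j => j.val = (i.val + 1) % n

/-- Membership in the family `F`: type `D_{2,2}`, two triangles sharing an edge,
or a cycle of length at least `4`. -/
def InF {α : Type*} (G : SimpleGraph α) : Prop :=
  Nonempty (G ≃g DmkGraph 2 2) ∨ Nonempty (G ≃g TwoTrianglesGraph) ∨
    ∃ n, 4 ≤ n ∧ Nonempty (G ≃g CycleGraph n)

/-- `B` is equivalent to a set whose graph is a tree of type `D_{m,k}`. -/
def EquivToDmkTree (Ω : BForm V) (B : Set V) (m k : ℕ) : Prop :=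
  ∃ B' : Set V, EquivSets Ω B B' ∧ Nonempty (Gr Ω B' ≃g DmkGraph m k)

/-- `X` is equivalent to a set whose graph is `E₆`. -/
def EquivToE6 (Ω : BForm V) (X : Set V) : Prop :=
  ∃ X' : Set V, EquivSets Ω X X' ∧ Nonempty (Gr Ω X' ≃g E6Graph)

/-- Some subset of `B` is equivalent to a set whose graph is `E₆`. -/
def HasE6Subgraph (Ω : BForm V) (B : Set V) : Prop :=
  ∃ X ⊆ B, EquivToE6 Ω X

/-- `B` is a basis of `V` (as a set). -/
def IsBasisSet (B : Set V) : Prop :=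
  LinearIndependent (ZMod 2) (Subtype.val : B → V) ∧ Submodule.span (ZMod 2) B = ⊤

/-- `B` is equivalent to a set whose graph is a tree containing `E₆` as an induced subgraph. -/
def EquivToE6Tree (Ω : BForm V) (B : Set V) : Prop :=
  ∃ B' : Set V, EquivSets Ω B B' ∧ (Gr Ω B').IsTree ∧
    ∃ X ⊆ B', Nonempty (Gr Ω X ≃g E6Graph)

/-- `A` is a maximal complete subgraph (maximal clique) of `G`. -/
def IsMaxClique {α : Type*} (G : SimpleGraph α) (A : Set α) : Prop :=
  G.IsClique A ∧ ∀ A', G.IsClique A' → A ⊆ A' → A' = A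

/-! ### Auxiliary lemmas for `stmt_13` -/

lemma zmod2_cases' : ∀ a : ZMod 2, a = 0 ∨ a = 1 := by decide

lemma zmod2_add_self' : ∀ a : ZMod 2, a + a = 0 := by decide

lemma vadd_self' (v : V) : v + v = 0 := by
  rw [← two_smul (ZMod 2) v, show (2 : ZMod 2) = 0 from rfl, zero_smul]

/-- The transvection `τ_b` as a linear map. -/
def tvmap (Ω : BForm V) (b : V) : V →ₗ[ZMod 2] V :=
  LinearMap.id + (LinearMap.toSpanSingleton (ZMod 2) V b).comp (Ω.flip b)

lemma tvmap_apply (Ω : BForm V) (b x : V) : tvmap Ω b x = x + Ω x b • b := by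
  simp [tvmap, LinearMap.toSpanSingleton_apply]

lemma tvmap_invol (Ω : BForm V) (b : V) (hb : Ω b b = 0) :
    Function.Involutive (tvmap Ω b) := by
  intro x
  have h1 : Ω (x + Ω x b • b) b = Ω x b := by simp [map_add, hb]
  rw [tvmap_apply, tvmap_apply, h1, add_assoc, ← add_smul, zmod2_add_self', zero_smul, add_zero]

/-- The transvection `τ_b` as a linear automorphism. -/
def tv (Ω : BForm V) (b : V) (hb : Ω b b = 0) : V ≃ₗ[ZMod 2] V :=
  LinearEquiv.ofInvolutive (tvmap Ω b) (tvmap_invol Ω b hb)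

lemma tv_apply (Ω : BForm V) (b : V) (hb : Ω b b = 0) (x : V) :
    tv Ω b hb x = x + Ω x b • b := tvmap_apply Ω b x

lemma tv_mem (Ω : BForm V) (C : Set V) (b : V) (hbC : b ∈ C) (hb : Ω b b = 0) :
    tv Ω b hb ∈ Gamma Ω C :=
  Subgroup.subset_closure ⟨b, hbC, fun x => tv_apply Ω b hb x⟩

/-- A set stable under all transvections from `C` is stable under `Γ_C`. -/
lemma gamma_inv (Ω : BForm V) (C : Set V) (hC : ∀ b ∈ C, Ω b b = 0) (S : Set V)
    (hS : ∀ b ∈ C, ∀ y ∈ S, y + Ω y b • b ∈ S) :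
    ∀ g ∈ Gamma Ω C, ∀ y ∈ S, g y ∈ S := by
  have key : ∀ g ∈ Gamma Ω C, (∀ y ∈ S, g y ∈ S) ∧ (∀ y ∈ S, g⁻¹ y ∈ S) := by
    intro g hg
    refine Subgroup.closure_induction
      (p := fun g _ => (∀ y ∈ S, g y ∈ S) ∧ (∀ y ∈ S, g⁻¹ y ∈ S)) ?_ ?_ ?_ ?_ hg
    · rintro g ⟨b, hbC, hgb⟩
      have hgS : ∀ y ∈ S, g y ∈ S := fun y hy => by rw [hgb]; exact hS b hbC y hy
      have hsq : ∀ y, g (g y) = y := by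
        intro y
        rw [hgb, hgb]
        have h1 : Ω (y + Ω y b • b) b = Ω y b := by simp [map_add, hC b hbC]
        rw [h1, add_assoc, ← add_smul, zmod2_add_self', zero_smul, add_zero]
      have hinv : ∀ y, g⁻¹ y = g y := by
        intro y
        calc g⁻¹ y = g⁻¹ (g (g y)) := by rw [hsq]
          _ = (g⁻¹ * g) (g y) := rfl
          _ = g y := by rw [inv_mul_cancel]; rfl
      exact ⟨hgS, fun y hy => by rw [hinv]; exact hgS y hy⟩
    · exact ⟨fun y hy => hy, fun y hy => by simpa using hy⟩
    · rintro a b _ _ ⟨ha, ha'⟩ ⟨hb, hb'⟩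
      refine ⟨fun y hy => ha _ (hb y hy), fun y hy => ?_⟩
      rw [mul_inv_rev]; exact hb' _ (ha' y hy)
    · rintro a _ ⟨ha, ha'⟩
      exact ⟨ha', by simpa using ha⟩
  exact fun g hg => (key g hg).1

lemma vanish (Ω : BForm V) (C : Set V) (b : V) (h : ∀ c ∈ C, Ω c b = 0) :
    ∀ v ∈ Submodule.span (ZMod 2) C, Ω v b = 0 := by
  intro v hv
  induction hv using Submodule.span_induction with
  | mem c hc => exact h c hc
  | zero => simp
  | add u w _ _ hu hw => simp [hu, hw]
  | smul c u _ hu => simp [hu]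

/-- Let `B = B₁ ⊔ ⋯ ⊔ B_r` with each `Gr(B_i)` connected, `Ω` alternating on
each `span(B_i)`, and `Ω(b,b') = 1` (for `b ∈ B_i`, `b' ∈ B_j`, `i ≠ j`) iff `j = i + 1`.
If `x` is not fixed by `Γ_B`, `L` is minimal with `Γ_{B_L}` not fixing `x`, and
`x ∈ span(B_L ∪ ⋯ ∪ B_r)` with component `xL ∈ span(B_L)`, then the `Γ_B`-orbit of `x` is
`Γ_{B_L}(xL) + span(B_{L+1} ∪ ⋯ ∪ B_r)`. -/
theorem stmt_13 {V : Type*} [AddCommGroup V] [Module (ZMod 2) V]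
    [FiniteDimensional (ZMod 2) V]
    (Ω : BForm V) (r : ℕ) (Bs : Fin r → Set V)
    (hdisj : ∀ i j : Fin r, i ≠ j → Disjoint (Bs i) (Bs j))
    (hli : LinearIndependent (ZMod 2) (Subtype.val : (⋃ i, Bs i) → V))
    (hbb : ∀ b ∈ ⋃ i, Bs i, Ω b b = 0)
    (hconn : (Gr Ω (⋃ i, Bs i)).Connected)
    (hconni : ∀ i, (Gr Ω (Bs i)).Connected)
    (halt : ∀ i : Fin r, ∀ z ∈ Submodule.span (ZMod 2) (Bs i), Ω z z = 0)
    (hcross : ∀ i j : Fin r, i ≠ j → ∀ b ∈ Bs i, ∀ b' ∈ Bs j,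
      (Ω b b' = 1 ↔ (j : ℕ) = (i : ℕ) + 1))
    (x : V) (hx : ∃ g ∈ Gamma Ω (⋃ i, Bs i), g x ≠ x)
    (L : Fin r) (hL : ∃ g ∈ Gamma Ω (Bs L), g x ≠ x)
    (hLmin : ∀ j : Fin r, j < L → ∀ g ∈ Gamma Ω (Bs j), g x = x)
    (hxspan : x ∈ Submodule.span (ZMod 2) (⋃ j, ⋃ (_ : L ≤ j), Bs j))
    (xL : V) (hxL : xL ∈ Submodule.span (ZMod 2) (Bs L))
    (hxtail : x - xL ∈ Submodule.span (ZMod 2) (⋃ j, ⋃ (_ : L < j), Bs j)) :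
    ∀ y : V, SameOrbit Ω (⋃ i, Bs i) x y ↔
      ∃ z w : V, SameOrbit Ω (Bs L) xL z ∧
        w ∈ Submodule.span (ZMod 2) (⋃ j, ⋃ (_ : L < j), Bs j) ∧ y = z + w := by
  classical
  set B : Set V := ⋃ i, Bs i with hB
  set Tset : Set V := ⋃ j, ⋃ (_ : L < j), Bs j with hT
  set Wspan : Submodule (ZMod 2) V := Submodule.span (ZMod 2) Tset with hW
  -- basic facts
  have hbbL : ∀ b ∈ Bs L, Ω b b = 0 := fun b hb => hbb b (Set.mem_iUnion.mpr ⟨L, hb⟩)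
  have huniq : ∀ v (i j : Fin r), v ∈ Bs i → v ∈ Bs j → i = j := by
    intro v i j hi hj
    by_contra hne
    exact (Set.disjoint_left.mp (hdisj i j hne) hi) hj
  have cross0 : ∀ i j : Fin r, i ≠ j → (j : ℕ) ≠ (i : ℕ) + 1 →
      ∀ b ∈ Bs i, ∀ b' ∈ Bs j, Ω b b' = 0 := by
    intro i j hne hval b hb b' hb'
    rcases zmod2_cases' (Ω b b') with h | h
    · exact h
    · exact absurd ((hcross i j hne b hb b' hb').mp h) hval
  have cross1 : ∀ i j : Fin r, i ≠ j → (j : ℕ) = (i : ℕ) + 1 →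
      ∀ b ∈ Bs i, ∀ b' ∈ Bs j, Ω b b' = 1 :=
    fun i j hne hval b hb b' hb' => (hcross i j hne b hb b' hb').mpr hval
  -- vanishing lemmas
  have vtail : ∀ b ∈ Bs L, ∀ w ∈ Wspan, Ω w b = 0 := by
    intro b hb w hw
    refine vanish Ω Tset b ?_ w hw
    intro c hc
    obtain ⟨m, hm, hcm⟩ := Set.mem_iUnion₂.mp hc
    refine cross0 m L (fun h => absurd (h ▸ hm) (lt_irrefl L)) ?_ c hcm b hb
    have := Fin.lt_def.mp hm; omega
  have vzlow : ∀ j : Fin r, j < L → ∀ b ∈ Bs j, ∀ z ∈ Submodule.span (ZMod 2) (Bs L),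
      Ω z b = 0 := by
    intro j hj b hb z hz
    refine vanish Ω (Bs L) b ?_ z hz
    intro c hc
    refine cross0 L j (fun h => absurd (h ▸ hj) (lt_irrefl j)) ?_ c hc b hb
    have := Fin.lt_def.mp hj; omega
  have vwlow : ∀ j : Fin r, j < L → ∀ b ∈ Bs j, ∀ w ∈ Wspan, Ω w b = 0 := by
    intro j hj b hb w hw
    refine vanish Ω Tset b ?_ w hw
    intro c hc
    obtain ⟨m, hm, hcm⟩ := Set.mem_iUnion₂.mp hc
    have h1 := Fin.lt_def.mp hm
    have h2 := Fin.lt_def.mp hj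
    refine cross0 m j (fun h => ?_) (by omega) c hcm b hb
    rw [h] at h1; omega
  -- orbit membership in span
  have horb_span : ∀ z, SameOrbit Ω (Bs L) xL z → z ∈ Submodule.span (ZMod 2) (Bs L) := by
    rintro z ⟨g, hg, rfl⟩
    refine gamma_inv Ω (Bs L) hbbL (Submodule.span (ZMod 2) (Bs L) : Set V) ?_ g hg xL hxL
    intro b hb y hy
    exact Submodule.add_mem _ hy (Submodule.smul_mem _ _ (Submodule.subset_span hb))
  -- applying one transvection to an orbit element
  have orbit_step : ∀ (C : Set V), (∀ b ∈ C, Ω b b = 0) → ∀ b ∈ C, ∀ u y : V,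
      SameOrbit Ω C u y → SameOrbit Ω C u (y + Ω y b • b) := by
    rintro C hC b hb u y ⟨g, hg, rfl⟩
    exact ⟨tv Ω b (hC b hb) * g, mul_mem (tv_mem Ω C b hb (hC b hb)) hg,
      tv_apply Ω b (hC b hb) (g u)⟩
  have orbit_stepB : ∀ b ∈ B, ∀ y, SameOrbit Ω B x y → SameOrbit Ω B x (y + Ω y b • b) :=
    fun b hb y hy => orbit_step B hbb b hb x y hy
  -- forward direction: the orbit is contained in `Orb(xL) + Wspan`
  have forward : ∀ y, SameOrbit Ω B x y →
      ∃ z, SameOrbit Ω (Bs L) xL z ∧ ∃ w ∈ Wspan, y = z + w := by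
    have hxS : x ∈ {y | ∃ z, SameOrbit Ω (Bs L) xL z ∧ ∃ w ∈ Wspan, y = z + w} :=
      ⟨xL, ⟨1, one_mem _, rfl⟩, x - xL, hxtail, by abel⟩
    have hinvS : ∀ b ∈ B, ∀ y ∈ {y | ∃ z, SameOrbit Ω (Bs L) xL z ∧ ∃ w ∈ Wspan, y = z + w},
        y + Ω y b • b ∈ {y | ∃ z, SameOrbit Ω (Bs L) xL z ∧ ∃ w ∈ Wspan, y = z + w} := by
      intro b hbB y hyS
      obtain ⟨z, hz, w, hw, rfl⟩ := hyS
      obtain ⟨j, hbj⟩ := Set.mem_iUnion.mp hbB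
      rcases lt_trichotomy j L with hj | hj | hj
      · have h0 : Ω (z + w) b = 0 := by
          rw [map_add, LinearMap.add_apply, vzlow j hj b hbj z (horb_span z hz),
            vwlow j hj b hbj w hw, add_zero]
        rw [h0, zero_smul, add_zero]
        exact ⟨z, hz, w, hw, rfl⟩
      · subst hj
        have h0 : Ω (z + w) b = Ω z b := by
          rw [map_add, LinearMap.add_apply, vtail b hbj w hw, add_zero]
        exact ⟨z + Ω z b • b, orbit_step (Bs j) hbbL b hbj xL z hz, w, hw,
          by rw [h0]; abel⟩
      · refine ⟨z, hz, w + Ω (z + w) b • b, Submodule.add_mem _ hw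
          (Submodule.smul_mem _ _ (Submodule.subset_span (Set.mem_iUnion₂.mpr ⟨j, hj, hbj⟩))),
          by abel⟩
    rintro y ⟨g, hg, rfl⟩
    exact gamma_inv Ω B hbb _ hinvS g hg x hxS
  -- fixed points
  have hfixed : ∀ (C : Set V), (∀ b ∈ C, Ω b b = 0) → ∀ y : V, (∀ b ∈ C, Ω y b = 0) →
      ∀ g ∈ Gamma Ω C, g y = y := by
    intro C hC y hy g hg
    have := gamma_inv Ω C hC {y} ?_ g hg y rfl
    · exact this
    · intro b hb y' hy'
      rw [Set.mem_singleton_iff] at hy' ⊢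
      subst hy'
      rw [hy b hb, zero_smul, add_zero]
  -- key existence: every orbit element pairs to 1 with some element of `Bs L`
  have key_exists : ∀ y, SameOrbit Ω B x y → ∃ b ∈ Bs L, Ω y b = 1 := by
    intro y hy
    obtain ⟨z, hz, w, hw, rfl⟩ := forward y hy
    by_contra hcon
    push_neg at hcon
    have hz0 : ∀ b ∈ Bs L, Ω z b = 0 := by
      intro b hb
      have h0 : Ω (z + w) b = Ω z b := by
        rw [map_add, LinearMap.add_apply, vtail b hb w hw, add_zero]
      rcases zmod2_cases' (Ω z b) with h | h
      · exact h
      · exact absurd (by rw [h0, h] : Ω (z + w) b = 1) (hcon b hb)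
    obtain ⟨g, hg, hgxL⟩ := hz
    have hzfix := hfixed (Bs L) hbbL z hz0
    have hxLz : xL = z := by
      calc xL = (g⁻¹ * g) xL := by rw [inv_mul_cancel]; rfl
        _ = g⁻¹ z := by rw [show (g⁻¹ * g) xL = g⁻¹ (g xL) from rfl, hgxL]
        _ = z := hzfix g⁻¹ (inv_mem hg)
    have hx0 : ∀ b ∈ Bs L, Ω x b = 0 := by
      intro b hb
      have hxsplit : x = xL + (x - xL) := by abel
      rw [hxsplit, map_add, LinearMap.add_apply, vtail b hb _ hxtail, hxLz,
        hz0 b hb, add_zero]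
    obtain ⟨g', hg', hgx⟩ := hL
    exact hgx (hfixed (Bs L) hbbL x hx0 g' hg')
  -- `Bs L` is nonempty
  have hBLne : (Bs L).Nonempty := by
    obtain ⟨b, hb, _⟩ := key_exists x ⟨1, one_mem _, rfl⟩
    exact ⟨b, hb⟩
  -- intermediate blocks are nonempty (connectivity)
  have hmid : ∀ k m : Fin r, L < m → m < k → (Bs k).Nonempty → (Bs m).Nonempty := by
    rintro k m hLm hmk ⟨bk, hbk⟩
    by_contra hempty
    have hBm : Bs m = ∅ := Set.not_nonempty_iff_eq_empty.mp hempty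
    obtain ⟨bL, hbL⟩ := hBLne
    have hbLU : bL ∈ B := Set.mem_iUnion.mpr ⟨L, hbL⟩
    have hbkU : bk ∈ B := Set.mem_iUnion.mpr ⟨k, hbk⟩
    obtain ⟨p⟩ := hconn.preconnected ⟨bL, hbLU⟩ ⟨bk, hbkU⟩
    have step : ∀ u v : B, (Gr Ω B).Adj u v →
        (∃ i, u.1 ∈ Bs i ∧ i < m) → ∃ i, v.1 ∈ Bs i ∧ i < m := by
      rintro ⟨u, hu⟩ ⟨v, hv⟩ hadj ⟨i, hui, him⟩
      obtain ⟨j, hvj⟩ := Set.mem_iUnion.mp hv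
      by_cases hij : i = j
      · exact ⟨j, hvj, hij ▸ him⟩
      · simp only [Gr, SimpleGraph.fromRel_adj] at hadj
        have hineq := Fin.lt_def.mp him
        have hjm : j ≠ m := by
          intro h; rw [h, hBm] at hvj; exact hvj
        have hjm' : (j : ℕ) ≠ (m : ℕ) := fun h => hjm (Fin.val_injective h)
        rcases hadj.2 with h1 | h1
        · have hj1 := (hcross i j hij u hui v hvj).mp h1
          exact ⟨j, hvj, Fin.lt_def.mpr (by omega)⟩
        · have hj1 := (hcross j i (Ne.symm hij) v hvj u hui).mp h1
          exact ⟨j, hvj, Fin.lt_def.mpr (by omega)⟩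
    have walkind : ∀ (u v : B) (_ : (Gr Ω B).Walk u v),
        (∃ i, u.1 ∈ Bs i ∧ i < m) → ∃ i, v.1 ∈ Bs i ∧ i < m := by
      intro u v p
      induction p with
      | nil => exact id
      | cons h _ ih => exact fun hu => ih (step _ _ h hu)
    obtain ⟨i, hbki, him⟩ := walkind _ _ p ⟨L, hbL, hLm⟩
    have hik : i = k := huniq bk i k hbki hbk
    rw [hik] at him
    exact absurd hmk (not_lt.mpr (le_of_lt him))
  -- toggling a single basis vector from a block above `L`
  have toggle : ∀ n : ℕ, ∀ k : Fin r, (k : ℕ) = (L : ℕ) + n + 1 →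
      ∀ b ∈ Bs k, ∀ y, SameOrbit Ω B x y → SameOrbit Ω B x (y + b) := by
    intro n
    induction n with
    | zero =>
      intro k hk b hbk y hy
      have hLk : L ≠ k := fun h => by rw [← h] at hk; omega
      rcases zmod2_cases' (Ω y b) with h0 | h1
      · obtain ⟨bt, hbt, hΩbt⟩ := key_exists y hy
        have hy1 : SameOrbit Ω B x (y + bt) := by
          have := orbit_stepB bt (Set.mem_iUnion.mpr ⟨L, hbt⟩) y hy
          rwa [hΩbt, one_smul] at this
        have hΩ1 : Ω (y + bt) b = 1 := by
          rw [map_add, LinearMap.add_apply, h0, zero_add]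
          exact cross1 L k hLk hk bt hbt b hbk
        have hy2 : SameOrbit Ω B x (y + bt + b) := by
          have := orbit_stepB b (Set.mem_iUnion.mpr ⟨k, hbk⟩) _ hy1
          rwa [hΩ1, one_smul] at this
        have hΩ2 : Ω (y + bt + b) bt = 1 := by
          have hbbt : Ω b bt = 0 :=
            cross0 k L (Ne.symm hLk) (by omega) b hbk bt hbt
          rw [map_add, LinearMap.add_apply, map_add, LinearMap.add_apply, hΩbt,
            hbbL bt hbt, hbbt]
          ring
        have hy3 := orbit_stepB bt (Set.mem_iUnion.mpr ⟨L, hbt⟩) _ hy2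
        rw [hΩ2, one_smul] at hy3
        have heq : y + bt + b + bt = y + b := by
          rw [show y + bt + b + bt = y + b + (bt + bt) by abel, vadd_self', add_zero]
        rwa [heq] at hy3
      · have := orbit_stepB b (Set.mem_iUnion.mpr ⟨k, hbk⟩) y hy
        rwa [h1, one_smul] at this
    | succ n ih =>
      intro k hk b hbk y hy
      rcases zmod2_cases' (Ω y b) with h0 | h1
      · have hk'lt : (L : ℕ) + n + 1 < r := by have := k.isLt; omega
        set k' : Fin r := ⟨(L : ℕ) + n + 1, hk'lt⟩ with hk'
        have hLk' : L < k' := Fin.lt_def.mpr (by simp [hk'])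
        have hk'k : k' < k := Fin.lt_def.mpr (by simp [hk']; omega)
        have hk'ne : k' ≠ k := Fin.ne_of_lt hk'k
        obtain ⟨bt, hbt⟩ := hmid k k' hLk' hk'k ⟨b, hbk⟩
        have hy1 : SameOrbit Ω B x (y + bt) := ih k' rfl bt hbt y hy
        have hΩ1 : Ω (y + bt) b = 1 := by
          rw [map_add, LinearMap.add_apply, h0, zero_add]
          exact cross1 k' k hk'ne (by simp [hk']; omega) bt hbt b hbk
        have hy2 : SameOrbit Ω B x (y + bt + b) := by
          have := orbit_stepB b (Set.mem_iUnion.mpr ⟨k, hbk⟩) _ hy1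
          rwa [hΩ1, one_smul] at this
        have hy3 : SameOrbit Ω B x (y + bt + b + bt) := ih k' rfl bt hbt _ hy2
        have heq : y + bt + b + bt = y + b := by
          rw [show y + bt + b + bt = y + b + (bt + bt) by abel, vadd_self', add_zero]
        rwa [heq] at hy3
      · have := orbit_stepB b (Set.mem_iUnion.mpr ⟨k, hbk⟩) y hy
        rwa [h1, one_smul] at this
  -- adding an arbitrary element of `Wspan` preserves the orbit
  have addW : ∀ v ∈ Wspan, ∀ y, SameOrbit Ω B x y → SameOrbit Ω B x (y + v) := by
    intro v hv
    induction hv using Submodule.span_induction with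
    | mem c hc =>
      obtain ⟨j, hj, hcj⟩ := Set.mem_iUnion₂.mp hc
      intro y hy
      have hjval := Fin.lt_def.mp hj
      exact toggle ((j : ℕ) - (L : ℕ) - 1) j (by omega) c hcj y hy
    | zero => intro y hy; simpa using hy
    | add u w _ _ hu hw =>
      intro y hy
      have := hw _ (hu y hy)
      rwa [← add_assoc]
    | smul c u _ hu =>
      intro y hy
      rcases zmod2_cases' c with h | h
      · rw [h, zero_smul, add_zero]; exact hy
      · rw [h, one_smul]; exact hu y hy
  -- `Γ_{B_L} ≤ Γ_B` and it fixes `Wspan` pointwise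
  have hGL_le : Gamma Ω (Bs L) ≤ Gamma Ω B :=
    Subgroup.closure_mono (fun g hg => by
      obtain ⟨b, hb, hgb⟩ := hg
      exact ⟨b, Set.mem_iUnion.mpr ⟨L, hb⟩, hgb⟩)
  have hfixW : ∀ w ∈ Wspan, ∀ g ∈ Gamma Ω (Bs L), g w = w := by
    intro w hw g hg
    exact hfixed (Bs L) hbbL w (fun b hb => vtail b hb w hw) g hg
  -- conclusion
  intro y
  constructor
  · intro hy
    obtain ⟨z, hz, w, hw, rfl⟩ := forward y hy
    exact ⟨z, w, hz, hw, rfl⟩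
  · rintro ⟨z, w, ⟨g, hg, hgxL⟩, hw, rfl⟩
    have hx' : SameOrbit Ω B x (z + (x - xL)) := by
      refine ⟨g, hGL_le hg, ?_⟩
      have hsplit : g x = g xL + g (x - xL) := by rw [← map_add]; congr 1; abel
      rw [hsplit, hgxL, hfixW _ hxtail g hg]
    have hv : w - (x - xL) ∈ Wspan := Submodule.sub_mem _ hw hxtail
    have := addW _ hv _ hx'
    rwa [show z + (x - xL) + (w - (x - xL)) = z + w by abel] at this
end

section
/- Let B⊆V be a linearly independent subset. If Gr(B) has an induced subgraph isomorphic to a member of the family F, then for any a,c∈B with Ω(a,c)=1, the graph Gr(φ_{c,a}(B)) also has an induced subgraph isomorphic to a member of F. -/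
open scoped BigOperators

variable {V : Type*} [AddCommGroup V] [Module (ZMod 2) V]

section S14
open Function SimpleGraph

variable {V : Type*} [AddCommGroup V] [Module (ZMod 2) V]

lemma zm2 : ∀ r : ZMod 2, r = 0 ∨ r = 1 := by decide

lemma gr_adj_iff (Ω : BForm V) (X : Set V) (x y : X) :
    (Gr Ω X).Adj x y ↔ (x : V) ≠ (y : V) ∧ (Ω x.1 y.1 = 1 ∨ Ω y.1 x.1 = 1) := by
  rw [Gr, SimpleGraph.fromRel_adj, ne_eq, Subtype.ext_iff]

instance ttDec : DecidableRel TwoTrianglesGraph.Adj := fun a b =>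
  decidable_of_iff' _ (SimpleGraph.fromRel_adj _ a b)

instance cycDec (n : ℕ) : DecidableRel (CycleGraph n).Adj := fun a b =>
  decidable_of_iff' _ (SimpleGraph.fromRel_adj _ a b)

def ClawG : SimpleGraph (Fin 4) :=
  SimpleGraph.fromRel fun i j => (i, j) ∈ [((0 : Fin 4), (1 : Fin 4)), (0, 2), (0, 3)]

instance clawDec : DecidableRel ClawG.Adj := fun a b =>
  decidable_of_iff' _ (SimpleGraph.fromRel_adj _ a b)

lemma clawG_iso : Nonempty (ClawG ≃g DmkGraph 2 2) := by
  refine ⟨⟨⟨![Sum.inl 1, Sum.inl 0, Sum.inr 0, Sum.inr 1],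
      Sum.elim ![1, 0] ![2, 3], by decide, by decide⟩, ?_⟩⟩
  intro a b
  fin_cases a <;> fin_cases b <;>
    simp [DmkGraph, ClawG, SimpleGraph.fromRel_adj, Equiv.coe_fn_mk] <;> decide

lemma InF_claw : InF ClawG := Or.inl clawG_iso
lemma InF_diamond : InF TwoTrianglesGraph := Or.inr (Or.inl ⟨RelIso.refl _⟩)
lemma InF_cyc (n : ℕ) (hn : 4 ≤ n) : InF (CycleGraph n) :=
  Or.inr (Or.inr ⟨n, hn, ⟨RelIso.refl _⟩⟩)

lemma InF_congr {α β : Type*} {G : SimpleGraph α} {H : SimpleGraph β} (e : G ≃g H)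
    (h : InF H) : InF G := by
  rcases h with ⟨⟨f⟩⟩ | ⟨⟨f⟩⟩ | ⟨n, hn, ⟨f⟩⟩
  · exact Or.inl ⟨e.trans f⟩
  · exact Or.inr (Or.inl ⟨e.trans f⟩)
  · exact Or.inr (Or.inr ⟨n, hn, ⟨e.trans f⟩⟩)

lemma gr_iso_of_fn {ι : Type*} (Ω : BForm V) (hsym : ∀ x y : V, Ω x y = Ω y x)
    (g : ι → V) (hinj : Injective g) (G : SimpleGraph ι)
    (hadj : ∀ i j, i ≠ j → (Ω (g i) (g j) = 1 ↔ G.Adj i j)) :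
    Nonempty (Gr Ω (Set.range g) ≃g G) := by
  refine ⟨(RelIso.mk (Equiv.ofInjective g hinj) ?_).symm⟩
  intro i j
  rcases eq_or_ne i j with rfl | hij
  · simp [SimpleGraph.irrefl]
  · have hv : ∀ k, ((Equiv.ofInjective g hinj) k : V) = g k := fun k => rfl
    rw [gr_adj_iff, hv, hv, hsym (g j) (g i), or_self]
    constructor
    · rintro ⟨-, h⟩; exact (hadj i j hij).1 h
    · intro h; exact ⟨hinj.ne hij, (hadj i j hij).2 h⟩

def SolSet (Ω : BForm V) (T : Set V) : Prop := ∃ S ⊆ T, InF (Gr Ω S)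

lemma sol_of_fn {ι : Type*} (Ω : BForm V) (hsym : ∀ x y : V, Ω x y = Ω y x) {T : Set V}
    (g : ι → V) (hmem : ∀ i, g i ∈ T) (hinj : Injective g) (G : SimpleGraph ι)
    (hG : InF G) (hadj : ∀ i j, i ≠ j → (Ω (g i) (g j) = 1 ↔ G.Adj i j)) :
    SolSet Ω T := by
  refine ⟨Set.range g, by rintro x ⟨i, rfl⟩; exact hmem i, ?_⟩
  obtain ⟨e⟩ := gr_iso_of_fn Ω hsym g hinj G hadj
  exact InF_congr e hG

end S14

section S14b
open Function SimpleGraph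

variable {V : Type*} [AddCommGroup V] [Module (ZMod 2) V]

lemma sol_fixed4 (Ω : BForm V) (hsym : ∀ x y : V, Ω x y = Ω y x) {T : Set V}
    (x0 x1 x2 x3 : V)
    (m0 : x0 ∈ T) (m1 : x1 ∈ T) (m2 : x2 ∈ T) (m3 : x3 ∈ T)
    (n01 : x0 ≠ x1) (n02 : x0 ≠ x2) (n03 : x0 ≠ x3)
    (n12 : x1 ≠ x2) (n13 : x1 ≠ x3) (n23 : x2 ≠ x3)
    (G : SimpleGraph (Fin 4)) (hG : InF G)
    (h01 : Ω x0 x1 = 1 ↔ G.Adj 0 1) (h02 : Ω x0 x2 = 1 ↔ G.Adj 0 2)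
    (h03 : Ω x0 x3 = 1 ↔ G.Adj 0 3) (h12 : Ω x1 x2 = 1 ↔ G.Adj 1 2)
    (h13 : Ω x1 x3 = 1 ↔ G.Adj 1 3) (h23 : Ω x2 x3 = 1 ↔ G.Adj 2 3) :
    SolSet Ω T := by
  have t10 : Ω x1 x0 = 1 ↔ G.Adj 1 0 := by rw [hsym x1 x0, SimpleGraph.adj_comm]; exact h01
  have t20 : Ω x2 x0 = 1 ↔ G.Adj 2 0 := by rw [hsym x2 x0, SimpleGraph.adj_comm]; exact h02
  have t30 : Ω x3 x0 = 1 ↔ G.Adj 3 0 := by rw [hsym x3 x0, SimpleGraph.adj_comm]; exact h03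
  have t21 : Ω x2 x1 = 1 ↔ G.Adj 2 1 := by rw [hsym x2 x1, SimpleGraph.adj_comm]; exact h12
  have t31 : Ω x3 x1 = 1 ↔ G.Adj 3 1 := by rw [hsym x3 x1, SimpleGraph.adj_comm]; exact h13
  have t32 : Ω x3 x2 = 1 ↔ G.Adj 3 2 := by rw [hsym x3 x2, SimpleGraph.adj_comm]; exact h23
  apply sol_of_fn Ω hsym ![x0, x1, x2, x3] ?_ ?_ G hG ?_
  · intro i; fin_cases i
    exacts [m0, m1, m2, m3]
  · intro i j h
    fin_cases i <;> fin_cases j <;>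
      first
        | rfl
        | (exact absurd h (by assumption))
        | (exact absurd h.symm (by assumption))
  · intro i j hij
    fin_cases i <;> fin_cases j
    exacts [absurd rfl hij, h01, h02, h03, t10, absurd rfl hij, h12, h13,
      t20, t21, absurd rfl hij, h23, t30, t31, t32, absurd rfl hij]

def cycRel (n s t : ℕ) : Prop :=
  t = s + 1 ∨ s = t + 1 ∨ (s = 0 ∧ t = n - 1) ∨ (t = 0 ∧ s = n - 1)

lemma cycRel_iff (n s t : ℕ) :
    cycRel n s t ↔ (t = s + 1 ∨ s = t + 1 ∨ (s = 0 ∧ t = n - 1) ∨ (t = 0 ∧ s = n - 1)) :=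
  Iff.rfl

lemma mod_succ_iff {n s t : ℕ} (hn : 0 < n) (hs : s < n) (_ : t < n) :
    t = (s + 1) % n ↔ (t = s + 1 ∨ (s = n - 1 ∧ t = 0)) := by
  rcases Nat.lt_or_ge (s + 1) n with h | h
  · rw [Nat.mod_eq_of_lt h]; omega
  · have hs1 : s + 1 = n := by omega
    rw [hs1, Nat.mod_self]; omega

lemma cycleGraph_adj_iff {n : ℕ} (hn : 0 < n) (i j : Fin n) :
    (CycleGraph n).Adj i j ↔ i.val ≠ j.val ∧ cycRel n i.val j.val := by
  rw [CycleGraph, SimpleGraph.fromRel_adj, ne_eq, Fin.ext_iff,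
    mod_succ_iff hn i.isLt j.isLt, mod_succ_iff hn j.isLt i.isLt, cycRel]
  omega

lemma sol_cycle (Ω : BForm V) (hsym : ∀ x y : V, Ω x y = Ω y x) {T : Set V}
    (m : ℕ) (hm : 4 ≤ m) (g : ℕ → V)
    (hmem : ∀ t, t ≤ m - 1 → g t ∈ T)
    (hinj : ∀ s t, s ≤ m - 1 → t ≤ m - 1 → g s = g t → s = t)
    (hadj : ∀ s t, s ≤ m - 1 → t ≤ m - 1 → (Ω (g s) (g t) = 1 ↔ cycRel m s t)) :
    SolSet Ω T := by
  refine sol_of_fn Ω hsym (fun i : Fin m => g i.val)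
    (fun i => hmem i.val (by have := i.isLt; omega))
    (fun i j h => Fin.ext (hinj i.val j.val (by have := i.isLt; omega)
      (by have := j.isLt; omega) h))
    (CycleGraph m) (InF_cyc m hm) ?_
  intro i j hij
  have hne : i.val ≠ j.val := fun h => hij (Fin.ext h)
  show Ω (g i.val) (g j.val) = 1 ↔ _
  rw [hadj i.val j.val (by have := i.isLt; omega) (by have := j.isLt; omega),
    cycleGraph_adj_iff (by omega) i j]
  exact ⟨fun h => ⟨hne, h⟩, fun h => h.2⟩

lemma gr_extract {ι : Type*} {X : Set V} (Ω : BForm V) (hΩ : ∀ x : V, Ω x x = 0)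
    (hsym : ∀ x y : V, Ω x y = Ω y x)
    {G : SimpleGraph ι} (e : Gr Ω X ≃g G) :
    ∃ u : ι → V, Injective u ∧ (∀ i, u i ∈ X) ∧ (∀ x ∈ X, ∃ i, u i = x) ∧
      (∀ i j, Ω (u i) (u j) = 1 ↔ G.Adj i j) := by
  refine ⟨fun i => (e.symm i : V), ?_, fun i => (e.symm i).2, ?_, ?_⟩
  · intro i j h
    exact e.symm.toEquiv.injective (Subtype.ext h)
  · intro x hx
    refine ⟨e ⟨x, hx⟩, ?_⟩
    show ((e.symm (e ⟨x, hx⟩) : X) : V) = x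
    rw [RelIso.symm_apply_apply]
  · intro i j
    have h := e.symm.map_rel_iff (a := i) (b := j)
    rw [gr_adj_iff] at h
    rcases eq_or_ne i j with rfl | hij
    · exact iff_of_false (by rw [hΩ]; decide) (G.irrefl)
    · have hne : ((e.symm i : X) : V) ≠ ((e.symm j : X) : V) := by
        intro hh
        exact hij (e.symm.toEquiv.injective (Subtype.ext hh))
      rw [← h, hsym (↑(e.symm j)) (↑(e.symm i)), or_self]
      exact ⟨fun hh => ⟨hne, hh⟩, fun hh => hh.2⟩

lemma vsum_ne (B : Set V) (hli : LinearIndependent (ZMod 2) (Subtype.val : B → V))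
    {a c : V} (ha : a ∈ B) (hc : c ∈ B) (hne : a ≠ c) :
    ∀ y ∈ B, c + a ≠ y := by
  have h2 : ∀ v : V, v + v = 0 := by
    intro v
    have h := two_smul (ZMod 2) v
    rw [show (2 : ZMod 2) = 0 by decide, zero_smul] at h
    exact h.symm
  intro y hy h
  rcases eq_or_ne y a with rfl | hya
  · have hc0 : c = 0 := by
      have h3 : c + y + y = c := by rw [add_assoc, h2, add_zero]
      rw [h, h2] at h3
      exact h3.symm
    exact hli.ne_zero ⟨c, hc⟩ hc0
  rcases eq_or_ne y c with rfl | hyc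
  · have ha0 : a = 0 := by
      have h3 : y + (y + a) = a := by rw [← add_assoc, h2, zero_add]
      rw [h, h2] at h3
      exact h3.symm
    exact hli.ne_zero ⟨a, ha⟩ ha0
  · have hac' : (⟨a, ha⟩ : B) ≠ ⟨c, hc⟩ := fun H => hne (congrArg Subtype.val H)
    have hay' : (⟨a, ha⟩ : B) ≠ ⟨y, hy⟩ := fun H => hya.symm (congrArg Subtype.val H)
    have hcy' : (⟨c, hc⟩ : B) ≠ ⟨y, hy⟩ := fun H => hyc.symm (congrArg Subtype.val H)
    set l : B →₀ ZMod 2 := Finsupp.single ⟨a, ha⟩ 1 + Finsupp.single ⟨c, hc⟩ 1 +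
      Finsupp.single ⟨y, hy⟩ 1 with hl
    have hl0 : Finsupp.linearCombination (ZMod 2) (Subtype.val : B → V) l = 0 := by
      rw [hl, map_add, map_add, Finsupp.linearCombination_single,
        Finsupp.linearCombination_single, Finsupp.linearCombination_single]
      simp only [one_smul]
      show a + c + y = 0
      rw [← h]
      have h4 : a + c + (c + a) = (a + a) + (c + c) := by abel
      rw [h4, h2, h2, add_zero]
    have hz := linearIndependent_iff.mp hli l hl0
    have hca' : (⟨c, hc⟩ : B) ≠ ⟨a, ha⟩ := Ne.symm hac'
    have hya' : (⟨y, hy⟩ : B) ≠ ⟨a, ha⟩ := Ne.symm hay'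
    have hfin := DFunLike.congr_fun hz (⟨a, ha⟩ : B)
    rw [hl] at hfin
    simp [Finsupp.single_apply, hca', hya'] at hfin
end S14b

section S14c
open Function SimpleGraph

variable {V : Type*} [AddCommGroup V] [Module (ZMod 2) V]

lemma neO (Ω : BForm V) {x y w : V} (h1 : Ω x w = 1) (h2 : Ω y w = 0) : x ≠ y :=
  fun e => by rw [e, h2] at h1; exact absurd h1 (by decide)

lemma neO' (Ω : BForm V) {x y w : V} (h1 : Ω w x = 1) (h2 : Ω w y = 0) : x ≠ y :=
  fun e => by rw [e, h2] at h1; exact absurd h1 (by decide)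

/-- claw with center `x0`, leaves `x1 x2 x3`. -/
lemma sol_claw (Ω : BForm V) (hsym : ∀ x y : V, Ω x y = Ω y x) {T : Set V}
    (x0 x1 x2 x3 : V) (m0 : x0 ∈ T) (m1 : x1 ∈ T) (m2 : x2 ∈ T) (m3 : x3 ∈ T)
    (n01 : x0 ≠ x1) (n02 : x0 ≠ x2) (n03 : x0 ≠ x3)
    (n12 : x1 ≠ x2) (n13 : x1 ≠ x3) (n23 : x2 ≠ x3)
    (e01 : Ω x0 x1 = 1) (e02 : Ω x0 x2 = 1) (e03 : Ω x0 x3 = 1)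
    (e12 : Ω x1 x2 = 0) (e13 : Ω x1 x3 = 0) (e23 : Ω x2 x3 = 0) : SolSet Ω T :=
  sol_fixed4 Ω hsym x0 x1 x2 x3 m0 m1 m2 m3 n01 n02 n03 n12 n13 n23 ClawG InF_claw
    (iff_of_true e01 (by decide)) (iff_of_true e02 (by decide))
    (iff_of_true e03 (by decide)) (iff_of_false (by rw [e12]; decide) (by decide))
    (iff_of_false (by rw [e13]; decide) (by decide))
    (iff_of_false (by rw [e23]; decide) (by decide))

/-- diamond (two triangles) with shared edge `x0x1`, other vertices `x2 x3`. -/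
lemma sol_tt (Ω : BForm V) (hsym : ∀ x y : V, Ω x y = Ω y x) {T : Set V}
    (x0 x1 x2 x3 : V) (m0 : x0 ∈ T) (m1 : x1 ∈ T) (m2 : x2 ∈ T) (m3 : x3 ∈ T)
    (n01 : x0 ≠ x1) (n02 : x0 ≠ x2) (n03 : x0 ≠ x3)
    (n12 : x1 ≠ x2) (n13 : x1 ≠ x3) (n23 : x2 ≠ x3)
    (e01 : Ω x0 x1 = 1) (e02 : Ω x0 x2 = 1) (e03 : Ω x0 x3 = 1)
    (e12 : Ω x1 x2 = 1) (e13 : Ω x1 x3 = 1) (e23 : Ω x2 x3 = 0) : SolSet Ω T :=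
  sol_fixed4 Ω hsym x0 x1 x2 x3 m0 m1 m2 m3 n01 n02 n03 n12 n13 n23
    TwoTrianglesGraph InF_diamond
    (iff_of_true e01 (by decide)) (iff_of_true e02 (by decide))
    (iff_of_true e03 (by decide)) (iff_of_true e12 (by decide))
    (iff_of_true e13 (by decide)) (iff_of_false (by rw [e23]; decide) (by decide))

/-- 4-cycle `x0 — x1 — x2 — x3 — x0`. -/
lemma sol_c4 (Ω : BForm V) (hsym : ∀ x y : V, Ω x y = Ω y x) {T : Set V}
    (x0 x1 x2 x3 : V) (m0 : x0 ∈ T) (m1 : x1 ∈ T) (m2 : x2 ∈ T) (m3 : x3 ∈ T)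
    (n01 : x0 ≠ x1) (n02 : x0 ≠ x2) (n03 : x0 ≠ x3)
    (n12 : x1 ≠ x2) (n13 : x1 ≠ x3) (n23 : x2 ≠ x3)
    (e01 : Ω x0 x1 = 1) (e02 : Ω x0 x2 = 0) (e03 : Ω x0 x3 = 1)
    (e12 : Ω x1 x2 = 1) (e13 : Ω x1 x3 = 0) (e23 : Ω x2 x3 = 1) : SolSet Ω T :=
  sol_fixed4 Ω hsym x0 x1 x2 x3 m0 m1 m2 m3 n01 n02 n03 n12 n13 n23
    (CycleGraph 4) (InF_cyc 4 (by norm_num))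
    (iff_of_true e01 (by decide)) (iff_of_false (by rw [e02]; decide) (by decide))
    (iff_of_true e03 (by decide)) (iff_of_true e12 (by decide))
    (iff_of_false (by rw [e13]; decide) (by decide)) (iff_of_true e23 (by decide))

lemma solve_claw_center (Ω : BForm V) (hΩ : ∀ x : V, Ω x x = 0)
    (hsym : ∀ x y : V, Ω x y = Ω y x)
    {B : Set V} {a c : V} (ha : a ∈ B) (hc : c ∈ B) (hac : Ω a c = 1)
    (hv : ∀ y ∈ B, c + a ≠ y)
    {l1 l2 l3 : V} (hl1 : l1 ∈ B) (hl2 : l2 ∈ B) (hl3 : l3 ∈ B)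
    (nc1 : l1 ≠ c) (nc2 : l2 ≠ c) (nc3 : l3 ≠ c)
    (n12 : l1 ≠ l2) (n13 : l1 ≠ l3) (n23 : l2 ≠ l3)
    (ec1 : Ω c l1 = 1) (ec2 : Ω c l2 = 1) (ec3 : Ω c l3 = 1)
    (e12 : Ω l1 l2 = 0) (e13 : Ω l1 l3 = 0) (e23 : Ω l2 l3 = 0) :
    SolSet Ω (insert (c + a) (B \ {c})) := by
  have hvl : ∀ y, Ω (c + a) y = Ω c y + Ω a y := fun y => by rw [map_add]; rfl
  have hvr : ∀ y, Ω y (c + a) = Ω y c + Ω y a := fun y => map_add (Ω y) c a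
  have hca : Ω c a = 1 := (hsym c a).trans hac
  have hanec : a ≠ c := neO Ω hac (hΩ c)
  have hT0 : c + a ∈ insert (c + a) (B \ {c}) := Set.mem_insert _ _
  have hTB : ∀ y, y ∈ B → y ≠ c → y ∈ insert (c + a) (B \ {c}) := fun y hy hne =>
    Set.mem_insert_of_mem _ ⟨hy, hne⟩
  rcases zm2 (Ω a l1) with r1 | r1 <;> rcases zm2 (Ω a l2) with r2 | r2 <;>
    rcases zm2 (Ω a l3) with r3 | r3
  -- (0,0,0): claw {v,l1,l2,l3}, center v
  · exact sol_claw Ω hsym (c+a) l1 l2 l3 hT0 (hTB _ hl1 nc1) (hTB _ hl2 nc2) (hTB _ hl3 nc3)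
      (hv _ hl1) (hv _ hl2) (hv _ hl3) n12 n13 n23
      (by rw [hvl, ec1, r1]; decide) (by rw [hvl, ec2, r2]; decide)
      (by rw [hvl, ec3, r3]; decide) e12 e13 e23
  -- (0,0,1): claw {v,a,l1,l2}, center v ; a plays role of "adjacent leaf l3"
  · exact sol_claw Ω hsym (c+a) a l1 l2 hT0 (hTB _ ha hanec) (hTB _ hl1 nc1) (hTB _ hl2 nc2)
      (hv _ ha) (hv _ hl1) (hv _ hl2)
      (neO Ω r3 e13) (neO Ω r3 e23) n12
      (by rw [hvl, hca, hΩ]; decide) (by rw [hvl, ec1, r1]; decide)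
      (by rw [hvl, ec2, r2]; decide) r1 r2 e12
  -- (0,1,0): claw {v,a,l1,l3}
  · exact sol_claw Ω hsym (c+a) a l1 l3 hT0 (hTB _ ha hanec) (hTB _ hl1 nc1) (hTB _ hl3 nc3)
      (hv _ ha) (hv _ hl1) (hv _ hl3)
      (neO Ω r2 e12) (neO Ω r2 ((hsym l3 l2).trans e23)) n13
      (by rw [hvl, hca, hΩ]; decide) (by rw [hvl, ec1, r1]; decide)
      (by rw [hvl, ec3, r3]; decide) r1 r3 e13
  -- (0,1,1): claw {a,v,l2,l3}, center a
  · exact sol_claw Ω hsym a (c+a) l2 l3 (hTB _ ha hanec) hT0 (hTB _ hl2 nc2) (hTB _ hl3 nc3)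
      (fun h => hv a ha h.symm) (neO Ω r2 (hΩ l2)) (neO Ω r3 (hΩ l3))
      (hv _ hl2) (hv _ hl3) n23
      (by rw [hvr, hac, hΩ]; decide) r2 r3
      (by rw [hvl, ec2, r2]; decide) (by rw [hvl, ec3, r3]; decide) e23
  -- (1,0,0): claw {v,a,l2,l3}
  · exact sol_claw Ω hsym (c+a) a l2 l3 hT0 (hTB _ ha hanec) (hTB _ hl2 nc2) (hTB _ hl3 nc3)
      (hv _ ha) (hv _ hl2) (hv _ hl3)
      (neO Ω r1 ((hsym l2 l1).trans e12)) (neO Ω r1 ((hsym l3 l1).trans e13)) n23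
      (by rw [hvl, hca, hΩ]; decide) (by rw [hvl, ec2, r2]; decide)
      (by rw [hvl, ec3, r3]; decide) r2 r3 e23
  -- (1,0,1): claw {a,v,l1,l3}, center a
  · exact sol_claw Ω hsym a (c+a) l1 l3 (hTB _ ha hanec) hT0 (hTB _ hl1 nc1) (hTB _ hl3 nc3)
      (fun h => hv a ha h.symm) (neO Ω r1 (hΩ l1)) (neO Ω r3 (hΩ l3))
      (hv _ hl1) (hv _ hl3) n13
      (by rw [hvr, hac, hΩ]; decide) r1 r3
      (by rw [hvl, ec1, r1]; decide) (by rw [hvl, ec3, r3]; decide) e13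
  -- (1,1,0): claw {a,v,l1,l2}, center a
  · exact sol_claw Ω hsym a (c+a) l1 l2 (hTB _ ha hanec) hT0 (hTB _ hl1 nc1) (hTB _ hl2 nc2)
      (fun h => hv a ha h.symm) (neO Ω r1 (hΩ l1)) (neO Ω r2 (hΩ l2))
      (hv _ hl1) (hv _ hl2) n12
      (by rw [hvr, hac, hΩ]; decide) r1 r2
      (by rw [hvl, ec1, r1]; decide) (by rw [hvl, ec2, r2]; decide) e12
  -- (1,1,1): claw {a,l1,l2,l3}, center a
  · exact sol_claw Ω hsym a l1 l2 l3 (hTB _ ha hanec) (hTB _ hl1 nc1) (hTB _ hl2 nc2)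
      (hTB _ hl3 nc3)
      (neO Ω r1 (hΩ l1)) (neO Ω r2 (hΩ l2)) (neO Ω r3 (hΩ l3)) n12 n13 n23
      r1 r2 r3 e12 e13 e23

end S14c

section S14d
open Function SimpleGraph

variable {V : Type*} [AddCommGroup V] [Module (ZMod 2) V]

lemma solve_claw_leaf (Ω : BForm V) (hΩ : ∀ x : V, Ω x x = 0)
    (hsym : ∀ x y : V, Ω x y = Ω y x)
    {B : Set V} {a c : V} (ha : a ∈ B) (hc : c ∈ B) (hac : Ω a c = 1)
    (hv : ∀ y ∈ B, c + a ≠ y)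
    {z l2 l3 : V} (hzB : z ∈ B) (hl2 : l2 ∈ B) (hl3 : l3 ∈ B)
    (ncz : z ≠ c) (nc2 : l2 ≠ c) (nc3 : l3 ≠ c)
    (nz2 : z ≠ l2) (nz3 : z ≠ l3) (n23 : l2 ≠ l3)
    (hz : Ω c z = 1) (hz2 : Ω z l2 = 1) (hz3 : Ω z l3 = 1)
    (hc2 : Ω c l2 = 0) (hc3 : Ω c l3 = 0) (h23 : Ω l2 l3 = 0) :
    SolSet Ω (insert (c + a) (B \ {c})) := by
  have hvl : ∀ y, Ω (c + a) y = Ω c y + Ω a y := fun y => by rw [map_add]; rfl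
  have hvr : ∀ y, Ω y (c + a) = Ω y c + Ω y a := fun y => map_add (Ω y) c a
  have hca : Ω c a = 1 := (hsym c a).trans hac
  have hanec : a ≠ c := neO Ω hac (hΩ c)
  have hT0 : c + a ∈ insert (c + a) (B \ {c}) := Set.mem_insert _ _
  have hTB : ∀ y, y ∈ B → y ≠ c → y ∈ insert (c + a) (B \ {c}) := fun y hy hne =>
    Set.mem_insert_of_mem _ ⟨hy, hne⟩
  have na2 : a ≠ l2 := neO Ω hac ((hsym l2 c).trans hc2)
  have na3 : a ≠ l3 := neO Ω hac ((hsym l3 c).trans hc3)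
  rcases zm2 (Ω a z) with rz | rz <;> rcases zm2 (Ω a l2) with r2 | r2 <;>
    rcases zm2 (Ω a l3) with r3 | r3
  -- (0,0,0): claw {z, v, l2, l3}, center z
  · exact sol_claw Ω hsym z (c+a) l2 l3 (hTB _ hzB ncz) hT0 (hTB _ hl2 nc2) (hTB _ hl3 nc3)
      (fun h => hv z hzB h.symm) nz2 nz3 (hv _ hl2) (hv _ hl3) n23
      (by rw [hvr, (hsym z c).trans hz, (hsym z a).trans rz]; decide) hz2 hz3
      (by rw [hvl, hc2, r2]; decide) (by rw [hvl, hc3, r3]; decide) h23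
  -- (0,0,1): diamond {v, l3, a, z}, shared edge v-l3
  · exact sol_tt Ω hsym (c+a) l3 a z hT0 (hTB _ hl3 nc3) (hTB _ ha hanec) (hTB _ hzB ncz)
      (hv _ hl3) (hv _ ha) (hv _ hzB) na3.symm nz3.symm ((neO Ω hz2 r2).symm)
      (by rw [hvl, hc3, r3]; decide) (by rw [hvl, hca, hΩ]; decide)
      (by rw [hvl, hz, rz]; decide) ((hsym l3 a).trans r3) ((hsym l3 z).trans hz3) rz
  -- (0,1,0): diamond {v, l2, a, z}, shared edge v-l2
  · exact sol_tt Ω hsym (c+a) l2 a z hT0 (hTB _ hl2 nc2) (hTB _ ha hanec) (hTB _ hzB ncz)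
      (hv _ hl2) (hv _ ha) (hv _ hzB) na2.symm nz2.symm ((neO Ω hz3 r3).symm)
      (by rw [hvl, hc2, r2]; decide) (by rw [hvl, hca, hΩ]; decide)
      (by rw [hvl, hz, rz]; decide) ((hsym l2 a).trans r2) ((hsym l2 z).trans hz2) rz
  -- (0,1,1): diamond {v, z, l2, l3}, shared edge v-z
  · exact sol_tt Ω hsym (c+a) z l2 l3 hT0 (hTB _ hzB ncz) (hTB _ hl2 nc2) (hTB _ hl3 nc3)
      (hv _ hzB) (hv _ hl2) (hv _ hl3) nz2 nz3 n23
      (by rw [hvl, hz, rz]; decide) (by rw [hvl, hc2, r2]; decide)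
      (by rw [hvl, hc3, r3]; decide) hz2 hz3 h23
  -- (1,0,0): claw {z, a, l2, l3}, center z
  · exact sol_claw Ω hsym z a l2 l3 (hTB _ hzB ncz) (hTB _ ha hanec) (hTB _ hl2 nc2)
      (hTB _ hl3 nc3)
      ((neO Ω rz (hΩ z)).symm) nz2 nz3 na2 na3 n23
      ((hsym z a).trans rz) hz2 hz3 r2 r3 h23
  -- (1,0,1): diamond {a, l3, v, z}, shared edge a-l3
  · exact sol_tt Ω hsym a l3 (c+a) z (hTB _ ha hanec) (hTB _ hl3 nc3) hT0 (hTB _ hzB ncz)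
      na3 (fun h => hv a ha h.symm) (neO Ω rz (hΩ z)) ((hv _ hl3).symm) nz3.symm (hv _ hzB)
      r3 (by rw [hvr, hac, hΩ]; decide) rz
      (by rw [hvr, (hsym l3 c).trans hc3, (hsym l3 a).trans r3]; decide)
      ((hsym l3 z).trans hz3) (by rw [hvl, hz, rz]; decide)
  -- (1,1,0): diamond {a, l2, v, z}, shared edge a-l2
  · exact sol_tt Ω hsym a l2 (c+a) z (hTB _ ha hanec) (hTB _ hl2 nc2) hT0 (hTB _ hzB ncz)
      na2 (fun h => hv a ha h.symm) (neO Ω rz (hΩ z)) ((hv _ hl2).symm) nz2.symm (hv _ hzB)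
      r2 (by rw [hvr, hac, hΩ]; decide) rz
      (by rw [hvr, (hsym l2 c).trans hc2, (hsym l2 a).trans r2]; decide)
      ((hsym l2 z).trans hz2) (by rw [hvl, hz, rz]; decide)
  -- (1,1,1): diamond {a, z, l2, l3}, shared edge a-z
  · exact sol_tt Ω hsym a z l2 l3 (hTB _ ha hanec) (hTB _ hzB ncz) (hTB _ hl2 nc2)
      (hTB _ hl3 nc3)
      (neO Ω rz (hΩ z)) (neO Ω r2 (hΩ l2)) (neO Ω r3 (hΩ l3)) nz2 nz3 n23
      rz r2 r3 hz2 hz3 h23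

lemma solve_diam_p (Ω : BForm V) (hΩ : ∀ x : V, Ω x x = 0)
    (hsym : ∀ x y : V, Ω x y = Ω y x)
    {B : Set V} {a c : V} (ha : a ∈ B) (hc : c ∈ B) (hac : Ω a c = 1)
    (hv : ∀ y ∈ B, c + a ≠ y)
    {q r s : V} (hqB : q ∈ B) (hrB : r ∈ B) (hsB : s ∈ B)
    (ncq : q ≠ c) (ncr : r ≠ c) (ncs : s ≠ c)
    (nqr : q ≠ r) (nqs : q ≠ s) (nrs : r ≠ s)
    (hq : Ω c q = 1) (hr : Ω c r = 1) (hs : Ω c s = 1)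
    (hqr : Ω q r = 1) (hqs : Ω q s = 1) (hrs : Ω r s = 0) :
    SolSet Ω (insert (c + a) (B \ {c})) := by
  have hvl : ∀ y, Ω (c + a) y = Ω c y + Ω a y := fun y => by rw [map_add]; rfl
  have hvr : ∀ y, Ω y (c + a) = Ω y c + Ω y a := fun y => map_add (Ω y) c a
  have hca : Ω c a = 1 := (hsym c a).trans hac
  have hanec : a ≠ c := neO Ω hac (hΩ c)
  have hT0 : c + a ∈ insert (c + a) (B \ {c}) := Set.mem_insert _ _
  have hTB : ∀ y, y ∈ B → y ≠ c → y ∈ insert (c + a) (B \ {c}) := fun y hy hne =>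
    Set.mem_insert_of_mem _ ⟨hy, hne⟩
  rcases zm2 (Ω a q) with rq | rq <;> rcases zm2 (Ω a r) with rr | rr <;>
    rcases zm2 (Ω a s) with rs | rs
  -- (0,0,0): diamond {v,q,r,s}, shared v-q
  · exact sol_tt Ω hsym (c+a) q r s hT0 (hTB _ hqB ncq) (hTB _ hrB ncr) (hTB _ hsB ncs)
      (hv _ hqB) (hv _ hrB) (hv _ hsB) nqr nqs nrs
      (by rw [hvl, hq, rq]; decide) (by rw [hvl, hr, rr]; decide)
      (by rw [hvl, hs, rs]; decide) hqr hqs hrs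
  -- (0,0,1): C4 v-a-s-q
  · exact sol_c4 Ω hsym (c+a) a s q hT0 (hTB _ ha hanec) (hTB _ hsB ncs) (hTB _ hqB ncq)
      (hv _ ha) (hv _ hsB) (hv _ hqB) (neO Ω rs (hΩ s)) ((neO Ω hqr rr).symm) nqs.symm
      (by rw [hvl, hca, hΩ]; decide) (by rw [hvl, hs, rs]; decide)
      (by rw [hvl, hq, rq]; decide) rs rq ((hsym s q).trans hqs)
  -- (0,1,0): C4 v-a-r-q
  · exact sol_c4 Ω hsym (c+a) a r q hT0 (hTB _ ha hanec) (hTB _ hrB ncr) (hTB _ hqB ncq)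
      (hv _ ha) (hv _ hrB) (hv _ hqB) (neO Ω rr (hΩ r)) ((neO Ω hqs rs).symm) nqr.symm
      (by rw [hvl, hca, hΩ]; decide) (by rw [hvl, hr, rr]; decide)
      (by rw [hvl, hq, rq]; decide) rr rq ((hsym r q).trans hqr)
  -- (0,1,1): claw {q, v, r, s}, center q
  · exact sol_claw Ω hsym q (c+a) r s (hTB _ hqB ncq) hT0 (hTB _ hrB ncr) (hTB _ hsB ncs)
      (fun h => hv q hqB h.symm) nqr nqs (hv _ hrB) (hv _ hsB) nrs
      (by rw [hvr, (hsym q c).trans hq, (hsym q a).trans rq]; decide) hqr hqs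
      (by rw [hvl, hr, rr]; decide) (by rw [hvl, hs, rs]; decide) hrs
  -- (1,0,0): C4 v-r-q-s
  · exact sol_c4 Ω hsym (c+a) r q s hT0 (hTB _ hrB ncr) (hTB _ hqB ncq) (hTB _ hsB ncs)
      (hv _ hrB) (hv _ hqB) (hv _ hsB) nqr.symm nrs nqs
      (by rw [hvl, hr, rr]; decide) (by rw [hvl, hq, rq]; decide)
      (by rw [hvl, hs, rs]; decide) ((hsym r q).trans hqr) hrs hqs
  -- (1,0,1): C4 v-a-q-r
  · exact sol_c4 Ω hsym (c+a) a q r hT0 (hTB _ ha hanec) (hTB _ hqB ncq) (hTB _ hrB ncr)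
      (hv _ ha) (hv _ hqB) (hv _ hrB) (neO Ω rq (hΩ q)) (neO Ω rs hrs) nqr
      (by rw [hvl, hca, hΩ]; decide) (by rw [hvl, hq, rq]; decide)
      (by rw [hvl, hr, rr]; decide) rq rr hqr
  -- (1,1,0): C4 v-a-q-s
  · exact sol_c4 Ω hsym (c+a) a q s hT0 (hTB _ ha hanec) (hTB _ hqB ncq) (hTB _ hsB ncs)
      (hv _ ha) (hv _ hqB) (hv _ hsB) (neO Ω rq (hΩ q)) (neO Ω rr ((hsym s r).trans hrs)) nqs
      (by rw [hvl, hca, hΩ]; decide) (by rw [hvl, hq, rq]; decide)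
      (by rw [hvl, hs, rs]; decide) rq rs hqs
  -- (1,1,1): diamond {a,q,r,s}, shared a-q
  · exact sol_tt Ω hsym a q r s (hTB _ ha hanec) (hTB _ hqB ncq) (hTB _ hrB ncr)
      (hTB _ hsB ncs)
      (neO Ω rq (hΩ q)) (neO Ω rr (hΩ r)) (neO Ω rs (hΩ s)) nqr nqs nrs
      rq rr rs hqr hqs hrs

lemma solve_diam_r (Ω : BForm V) (hΩ : ∀ x : V, Ω x x = 0)
    (hsym : ∀ x y : V, Ω x y = Ω y x)
    {B : Set V} {a c : V} (ha : a ∈ B) (hc : c ∈ B) (hac : Ω a c = 1)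
    (hv : ∀ y ∈ B, c + a ≠ y)
    {p q s : V} (hpB : p ∈ B) (hqB : q ∈ B) (hsB : s ∈ B)
    (ncp : p ≠ c) (ncq : q ≠ c) (ncs : s ≠ c)
    (npq : p ≠ q) (nps : p ≠ s) (nqs : q ≠ s)
    (hp : Ω c p = 1) (hq : Ω c q = 1) (hcs : Ω c s = 0)
    (hpq : Ω p q = 1) (hps : Ω p s = 1) (hqs : Ω q s = 1) :
    SolSet Ω (insert (c + a) (B \ {c})) := by
  have hvl : ∀ y, Ω (c + a) y = Ω c y + Ω a y := fun y => by rw [map_add]; rfl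
  have hvr : ∀ y, Ω y (c + a) = Ω y c + Ω y a := fun y => map_add (Ω y) c a
  have hca : Ω c a = 1 := (hsym c a).trans hac
  have hanec : a ≠ c := neO Ω hac (hΩ c)
  have hT0 : c + a ∈ insert (c + a) (B \ {c}) := Set.mem_insert _ _
  have hTB : ∀ y, y ∈ B → y ≠ c → y ∈ insert (c + a) (B \ {c}) := fun y hy hne =>
    Set.mem_insert_of_mem _ ⟨hy, hne⟩
  have nas : a ≠ s := neO Ω hac ((hsym s c).trans hcs)
  rcases zm2 (Ω a p) with rp | rp <;> rcases zm2 (Ω a q) with rq | rq <;>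
    rcases zm2 (Ω a s) with rs | rs
  -- (0,0,0): diamond {p,q,v,s}, shared p-q
  · exact sol_tt Ω hsym p q (c+a) s (hTB _ hpB ncp) (hTB _ hqB ncq) hT0 (hTB _ hsB ncs)
      npq (fun h => hv p hpB h.symm) nps (fun h => hv q hqB h.symm) nqs (hv _ hsB)
      hpq (by rw [hvr, (hsym p c).trans hp, (hsym p a).trans rp]; decide) hps
      (by rw [hvr, (hsym q c).trans hq, (hsym q a).trans rq]; decide) hqs
      (by rw [hvl, hcs, rs]; decide)
  -- (0,0,1): diamond {v,s,a,p}, shared v-s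
  · exact sol_tt Ω hsym (c+a) s a p hT0 (hTB _ hsB ncs) (hTB _ ha hanec) (hTB _ hpB ncp)
      (hv _ hsB) (hv _ ha) (hv _ hpB) ((neO Ω rs (hΩ s)).symm) nps.symm ((neO Ω hpq rq).symm)
      (by rw [hvl, hcs, rs]; decide) (by rw [hvl, hca, hΩ]; decide)
      (by rw [hvl, hp, rp]; decide) ((hsym s a).trans rs) ((hsym s p).trans hps) rp
  -- (0,1,0): C4 v-p-q-a
  · exact sol_c4 Ω hsym (c+a) p q a hT0 (hTB _ hpB ncp) (hTB _ hqB ncq) (hTB _ ha hanec)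
      (hv _ hpB) (hv _ hqB) (hv _ ha) npq (neO Ω hps rs) ((neO Ω rq (hΩ q)).symm)
      (by rw [hvl, hp, rp]; decide) (by rw [hvl, hq, rq]; decide)
      (by rw [hvl, hca, hΩ]; decide) hpq ((hsym p a).trans rp) ((hsym q a).trans rq)
  -- (0,1,1): diamond {p,s,v,q}, shared p-s
  · exact sol_tt Ω hsym p s (c+a) q (hTB _ hpB ncp) (hTB _ hsB ncs) hT0 (hTB _ hqB ncq)
      nps (fun h => hv p hpB h.symm) npq (fun h => hv s hsB h.symm) nqs.symm (hv _ hqB)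
      hps (by rw [hvr, (hsym p c).trans hp, (hsym p a).trans rp]; decide) hpq
      (by rw [hvr, (hsym s c).trans hcs, (hsym s a).trans rs]; decide)
      ((hsym s q).trans hqs) (by rw [hvl, hq, rq]; decide)
  -- (1,0,0): C4 v-q-p-a
  · exact sol_c4 Ω hsym (c+a) q p a hT0 (hTB _ hqB ncq) (hTB _ hpB ncp) (hTB _ ha hanec)
      (hv _ hqB) (hv _ hpB) (hv _ ha) npq.symm (neO Ω hqs rs) ((neO Ω rp (hΩ p)).symm)
      (by rw [hvl, hq, rq]; decide) (by rw [hvl, hp, rp]; decide)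
      (by rw [hvl, hca, hΩ]; decide) ((hsym q p).trans hpq) ((hsym q a).trans rq)
      ((hsym p a).trans rp)
  -- (1,0,1): diamond {q,s,v,p}, shared q-s
  · exact sol_tt Ω hsym q s (c+a) p (hTB _ hqB ncq) (hTB _ hsB ncs) hT0 (hTB _ hpB ncp)
      nqs (fun h => hv q hqB h.symm) npq.symm (fun h => hv s hsB h.symm) nps.symm (hv _ hpB)
      hqs (by rw [hvr, (hsym q c).trans hq, (hsym q a).trans rq]; decide)
      ((hsym q p).trans hpq)
      (by rw [hvr, (hsym s c).trans hcs, (hsym s a).trans rs]; decide)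
      ((hsym s p).trans hps) (by rw [hvl, hp, rp]; decide)
  -- (1,1,0): diamond {p,q,a,s}, shared p-q
  · exact sol_tt Ω hsym p q a s (hTB _ hpB ncp) (hTB _ hqB ncq) (hTB _ ha hanec)
      (hTB _ hsB ncs)
      npq ((neO Ω rp (hΩ p)).symm) nps ((neO Ω rq (hΩ q)).symm) nqs nas
      hpq ((hsym p a).trans rp) hps ((hsym q a).trans rq) hqs rs
  -- (1,1,1): diamond {a,s,v,p}, shared a-s
  · exact sol_tt Ω hsym a s (c+a) p (hTB _ ha hanec) (hTB _ hsB ncs) hT0 (hTB _ hpB ncp)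
      nas (fun h => hv a ha h.symm) (neO Ω rp (hΩ p)) (fun h => hv s hsB h.symm) nps.symm
      (hv _ hpB)
      rs (by rw [hvr, hac, hΩ]; decide) rp
      (by rw [hvr, (hsym s c).trans hcs, (hsym s a).trans rs]; decide)
      ((hsym s p).trans hps) (by rw [hvl, hp, rp]; decide)

end S14d

section S14e
open Function SimpleGraph

variable {V : Type*} [AddCommGroup V] [Module (ZMod 2) V]

/-- cycle solver from strict-order data -/
lemma sol_cycle' (Ω : BForm V) (hΩ : ∀ x : V, Ω x x = 0)
    (hsym : ∀ x y : V, Ω x y = Ω y x) {T : Set V}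
    (m : ℕ) (hm : 4 ≤ m) (g : ℕ → V)
    (hmem : ∀ t, t ≤ m - 1 → g t ∈ T)
    (hinj : ∀ s t, s < t → t ≤ m - 1 → g s ≠ g t)
    (hadj : ∀ s t, s < t → t ≤ m - 1 →
      (Ω (g s) (g t) = 1 ↔ (t = s + 1 ∨ (s = 0 ∧ t = m - 1)))) : SolSet Ω T := by
  apply sol_cycle Ω hsym m hm g hmem ?_ ?_
  · intro s t hs ht h
    rcases lt_trichotomy s t with hlt | heq | hgt
    · exact absurd h (hinj s t hlt ht)
    · exact heq
    · exact absurd h.symm (hinj t s hgt hs)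
  · intro s t hs ht
    rcases lt_trichotomy s t with hlt | heq | hgt
    · rw [hadj s t hlt ht]; unfold cycRel; omega
    · subst heq
      exact iff_of_false (by rw [hΩ]; decide) (by unfold cycRel; omega)
    · rw [hsym (g s) (g t), hadj t s hgt hs]; unfold cycRel; omega

section CycleLemmas

variable (Ω : BForm V) (hΩ : ∀ x : V, Ω x x = 0) (hsym : ∀ x y : V, Ω x y = Ω y x)
variable {B : Set V} {a c : V} (ha : a ∈ B) (hc : c ∈ B) (hac : Ω a c = 1)
variable (hv : ∀ y ∈ B, c + a ≠ y)
variable {n : ℕ} (hn : 4 ≤ n) {w : ℕ → V} (hw0 : w 0 = c)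
variable (hmemW : ∀ t, t ≤ n - 1 → w t ∈ B)
variable (hinjW : ∀ s t, s ≤ n - 1 → t ≤ n - 1 → w s = w t → s = t)
variable (hadjW : ∀ s t, s ≤ n - 1 → t ≤ n - 1 → (Ω (w s) (w t) = 1 ↔ cycRel n s t))

section Basics
include hΩ hsym ha hc hac hv hn hw0 hmemW hinjW hadjW

private lemma cyc_basics :
    (∀ y, Ω (c + a) y = Ω c y + Ω a y) ∧ (∀ y, Ω y (c + a) = Ω y c + Ω y a) ∧
    Ω c a = 1 ∧ a ≠ c ∧ (c + a ∈ insert (c + a) (B \ {c})) ∧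
    (∀ y, y ∈ B → y ≠ c → y ∈ insert (c + a) (B \ {c})) ∧
    (∀ s t, s ≤ n - 1 → t ≤ n - 1 → ¬ cycRel n s t → Ω (w s) (w t) = 0) ∧
    (∀ t, 1 ≤ t → t ≤ n - 1 → w t ≠ c) ∧
    (∀ t, 1 ≤ t → t ≤ n - 1 → w t ∈ insert (c + a) (B \ {c})) := by
  have hΩ0 : ∀ s t, s ≤ n - 1 → t ≤ n - 1 → ¬ cycRel n s t → Ω (w s) (w t) = 0 := by
    intro s t hs ht hnot
    rcases zm2 (Ω (w s) (w t)) with h | h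
    · exact h
    · exact absurd ((hadjW s t hs ht).1 h) hnot
  have hwc : ∀ t, 1 ≤ t → t ≤ n - 1 → w t ≠ c := by
    intro t h1 ht heq
    have := hinjW t 0 ht (by omega) (heq.trans hw0.symm)
    omega
  exact ⟨fun y => by rw [map_add]; rfl, fun y => map_add (Ω y) c a,
    (hsym c a).trans hac, neO Ω hac (hΩ c), Set.mem_insert _ _,
    fun y hy hne => Set.mem_insert_of_mem _ ⟨hy, hne⟩, hΩ0, hwc,
    fun t h1 ht => Set.mem_insert_of_mem _ ⟨hmemW t ht, hwc t h1 ht⟩⟩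

end Basics

include hΩ hsym ha hc hac hv hn hw0 hmemW hinjW hadjW

lemma cyc_clone (hα : ∀ t, 1 ≤ t → t ≤ n - 1 → Ω a (w t) = 0) :
    SolSet Ω (insert (c + a) (B \ {c})) := by
  obtain ⟨hvl, hvr, hca, hanec, hT0, hTB, hΩ0, hwc, hTW⟩ :=
    cyc_basics Ω hΩ hsym ha hc hac hv hn hw0 hmemW hinjW hadjW
  apply sol_cycle' Ω hΩ hsym n hn (fun t => match t with | 0 => c + a | u+1 => w (u+1))
  · intro t ht
    rcases t with _ | u
    · exact hT0
    · exact hTW (u+1) (by omega) ht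
  · intro s t hst ht
    rcases s with _ | us <;> rcases t with _ | ut
    · omega
    · exact hv _ (hmemW (ut+1) ht)
    · omega
    · intro h
      have := hinjW (us+1) (ut+1) (by omega) ht h
      omega
  · intro s t hst ht
    rcases s with _ | us <;> rcases t with _ | ut
    · omega
    · show Ω (c + a) (w (ut+1)) = 1 ↔ _
      have hcalc : Ω (c + a) (w (ut+1)) = Ω (w 0) (w (ut+1)) := by
        rw [hvl, hα (ut+1) (by omega) ht, add_zero, hw0]
      rw [hcalc, hadjW 0 (ut+1) (by omega) ht]; unfold cycRel; omega
    · omega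
    · show Ω (w (us+1)) (w (ut+1)) = 1 ↔ _
      rw [hadjW (us+1) (ut+1) (by omega) ht]; unfold cycRel; omega

lemma cyc_pair1 (hα1 : Ω a (w 1) = 1) (hα2 : Ω a (w 2) = 1) :
    SolSet Ω (insert (c + a) (B \ {c})) := by
  obtain ⟨hvl, hvr, hca, hanec, hT0, hTB, hΩ0, hwc, hTW⟩ :=
    cyc_basics Ω hΩ hsym ha hc hac hv hn hw0 hmemW hinjW hadjW
  have h2c : Ω (w 2) c = 0 := by
    rw [← hw0]; exact hΩ0 2 0 (by omega) (by omega) (by unfold cycRel; omega)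
  have h01 : Ω c (w 1) = 1 := by
    rw [← hw0]; exact (hadjW 0 1 (by omega) (by omega)).2 (by unfold cycRel; omega)
  exact sol_tt Ω hsym a (w 2) (c+a) (w 1) (hTB a ha hanec) (hTW 2 (by omega) (by omega)) hT0
    (hTW 1 (by omega) (by omega))
    (neO Ω hα2 (hΩ (w 2))) (fun h => hv a ha h.symm) (neO Ω hα1 (hΩ (w 1)))
    (fun h => hv _ (hmemW 2 (by omega)) h.symm)
    (fun h => by have := hinjW 2 1 (by omega) (by omega) h; omega)
    (hv _ (hmemW 1 (by omega)))
    hα2 (by rw [hvr, hac, hΩ]; decide) hα1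
    (by rw [hvr, h2c, (hsym (w 2) a).trans hα2]; decide)
    ((hadjW 2 1 (by omega) (by omega)).2 (by unfold cycRel; omega))
    (by rw [hvl, h01, hα1]; decide)

lemma cyc_triple (i : ℕ) (h1 : 1 ≤ i) (h2 : i + 2 ≤ n - 1)
    (hβ0 : Ω a (w i) = 1) (hβ1 : Ω a (w (i+1)) = 1) (hβ2 : Ω a (w (i+2)) = 1) :
    SolSet Ω (insert (c + a) (B \ {c})) := by
  obtain ⟨hvl, hvr, hca, hanec, hT0, hTB, hΩ0, hwc, hTW⟩ :=
    cyc_basics Ω hΩ hsym ha hc hac hv hn hw0 hmemW hinjW hadjW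
  have hwne : ∀ s t, s ≤ n-1 → t ≤ n-1 → s ≠ t → w s ≠ w t :=
    fun s t hs ht hne h => hne (hinjW s t hs ht h)
  exact sol_tt Ω hsym a (w (i+1)) (w i) (w (i+2)) (hTB a ha hanec)
    (hTW (i+1) (by omega) (by omega)) (hTW i (by omega) (by omega))
    (hTW (i+2) (by omega) (by omega))
    (neO Ω hβ1 (hΩ (w (i+1)))) (neO Ω hβ0 (hΩ (w i))) (neO Ω hβ2 (hΩ (w (i+2))))
    (hwne (i+1) i (by omega) (by omega) (by omega))
    (hwne (i+1) (i+2) (by omega) (by omega) (by omega))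
    (hwne i (i+2) (by omega) (by omega) (by omega))
    hβ1 hβ0 hβ2
    ((hadjW (i+1) i (by omega) (by omega)).2 (by unfold cycRel; omega))
    ((hadjW (i+1) (i+2) (by omega) (by omega)).2 (by unfold cycRel; omega))
    (hΩ0 i (i+2) (by omega) (by omega) (by unfold cycRel; omega))

lemma cyc_mid (hsm : n = 4 ∨ n = 5) (hα1 : Ω a (w 1) = 0) (hα2 : Ω a (w 2) = 1)
    (hα3 : Ω c (w 3) + Ω a (w 3) = 1) :
    SolSet Ω (insert (c + a) (B \ {c})) := by
  obtain ⟨hvl, hvr, hca, hanec, hT0, hTB, hΩ0, hwc, hTW⟩ :=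
    cyc_basics Ω hΩ hsym ha hc hac hv hn hw0 hmemW hinjW hadjW
  have hwne : ∀ s t, s ≤ n-1 → t ≤ n-1 → s ≠ t → w s ≠ w t :=
    fun s t hs ht hne h => hne (hinjW s t hs ht h)
  have hc1 : Ω c (w 1) = 1 := by
    rw [← hw0]; exact (hadjW 0 1 (by omega) (by omega)).2 (by unfold cycRel; omega)
  have hc2 : Ω c (w 2) = 0 := by
    rw [← hw0]; exact hΩ0 0 2 (by omega) (by omega) (by unfold cycRel; omega)
  exact sol_tt Ω hsym (c+a) (w 2) (w 1) (w 3) hT0 (hTW 2 (by omega) (by omega))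
    (hTW 1 (by omega) (by omega)) (hTW 3 (by omega) (by omega))
    (hv _ (hmemW 2 (by omega))) (hv _ (hmemW 1 (by omega))) (hv _ (hmemW 3 (by omega)))
    (hwne 2 1 (by omega) (by omega) (by omega))
    (hwne 2 3 (by omega) (by omega) (by omega))
    (hwne 1 3 (by omega) (by omega) (by omega))
    (by rw [hvl, hc2, hα2]; decide) (by rw [hvl, hc1, hα1]; decide)
    (by rw [hvl]; exact hα3)
    ((hadjW 2 1 (by omega) (by omega)).2 (by unfold cycRel; omega))
    ((hadjW 2 3 (by omega) (by omega)).2 (by unfold cycRel; omega))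
    (hΩ0 1 3 (by omega) (by omega) (by unfold cycRel; omega))

lemma cyc_single1 (hα1 : Ω a (w 1) = 1)
    (hrest : ∀ t, 2 ≤ t → t ≤ n - 1 → Ω a (w t) = 0) :
    SolSet Ω (insert (c + a) (B \ {c})) := by
  obtain ⟨hvl, hvr, hca, hanec, hT0, hTB, hΩ0, hwc, hTW⟩ :=
    cyc_basics Ω hΩ hsym ha hc hac hv hn hw0 hmemW hinjW hadjW
  apply sol_cycle' Ω hΩ hsym (n+1) (by omega)
    (fun t => match t with | 0 => c + a | 1 => a | u+2 => w (u+1))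
  · intro t ht
    rcases t with _ | (_ | u)
    · exact hT0
    · exact hTB a ha hanec
    · exact hTW (u+1) (by omega) (by omega)
  · intro s t hst ht
    rcases s with _ | (_ | us) <;> rcases t with _ | (_ | ut)
    · omega
    · exact hv a ha
    · exact hv _ (hmemW (ut+1) (by omega))
    · omega
    · omega
    · -- a ≠ w (ut+1)
      rcases Nat.eq_zero_or_pos ut with rfl | hpos
      · exact neO Ω hα1 (hΩ (w 1))
      · by_cases hlast : ut + 1 = n - 1
        · have h13 : Ω (w (ut+1)) (w 1) = 0 := by
            apply hΩ0 (ut+1) 1 (by omega) (by omega)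
            rw [hlast]; unfold cycRel; omega
          exact neO Ω hα1 h13
        · have hcd : Ω (w (ut+1)) c = 0 := by
            rw [← hw0]
            exact hΩ0 (ut+1) 0 (by omega) (by omega) (by unfold cycRel; omega)
          exact neO Ω hac hcd
    · omega
    · omega
    · intro h
      have := hinjW (us+1) (ut+1) (by omega) (by omega) h
      omega
  · intro s t hst ht
    rcases s with _ | (_ | us) <;> rcases t with _ | (_ | ut)
    · omega
    · -- v, a
      exact iff_of_true (by rw [hvl, hca, hΩ]; decide) (by omega)
    · -- v, w (ut+1)
      show Ω (c+a) (w (ut+1)) = 1 ↔ _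
      have hcc : Ω c (w (ut+1)) = Ω (w 0) (w (ut+1)) := by rw [hw0]
      rcases Nat.eq_zero_or_pos ut with rfl | hpos
      · refine iff_of_false ?_ (by omega)
        rw [hvl, hcc, (hadjW 0 1 (by omega) (by omega)).2 (by unfold cycRel; omega),
          hα1]
        decide
      · by_cases hlast : ut + 1 = n - 1
        · refine iff_of_true ?_ (by omega)
          rw [hvl, hcc, (hadjW 0 (ut+1) (by omega) (by omega)).2
            (by rw [hlast]; unfold cycRel; omega), hrest (ut+1) (by omega) (by omega)]
          decide
        · refine iff_of_false ?_ (by omega)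
          rw [hvl, hcc, hΩ0 0 (ut+1) (by omega) (by omega) (by unfold cycRel; omega),
            hrest (ut+1) (by omega) (by omega)]
          decide
    · omega
    · omega
    · -- a, w (ut+1)
      show Ω a (w (ut+1)) = 1 ↔ _
      rcases Nat.eq_zero_or_pos ut with rfl | hpos
      · exact iff_of_true hα1 (by omega)
      · refine iff_of_false ?_ (by omega)
        rw [hrest (ut+1) (by omega) (by omega)]; decide
    · omega
    · omega
    · show Ω (w (us+1)) (w (ut+1)) = 1 ↔ _
      rw [hadjW (us+1) (ut+1) (by omega) (by omega)]; unfold cycRel; omega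

lemma cyc_gap (i j : ℕ) (h1i : 1 ≤ i) (hij : i + 2 ≤ j) (hjn : j ≤ n - 1)
    (hβi : Ω a (w i) = 1) (hβj : Ω a (w j) = 1)
    (hmid : ∀ t, i < t → t < j → Ω a (w t) = 0) :
    SolSet Ω (insert (c + a) (B \ {c})) := by
  obtain ⟨hvl, hvr, hca, hanec, hT0, hTB, hΩ0, hwc, hTW⟩ :=
    cyc_basics Ω hΩ hsym ha hc hac hv hn hw0 hmemW hinjW hadjW
  apply sol_cycle' Ω hΩ hsym (j - i + 2) (by omega)
    (fun t => match t with | 0 => a | u+1 => w (i + u))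
  · intro t ht
    rcases t with _ | u
    · exact hTB a ha hanec
    · exact hTW (i+u) (by omega) (by omega)
  · intro s t hst ht
    rcases s with _ | us <;> rcases t with _ | ut
    · omega
    · -- a ≠ w (i + ut)
      rcases Nat.eq_zero_or_pos ut with rfl | hpos
      · exact neO Ω hβi (by rw [Nat.add_zero]; exact hΩ (w i))
      · by_cases hju : i + ut = j
        · have hb : Ω a (w (i + ut)) = 1 := by rw [hju]; exact hβj
          exact neO Ω hb (hΩ (w (i + ut)))
        · have hcd : Ω (w (i+ut)) c = 0 := by
            rw [← hw0]
            exact hΩ0 (i+ut) 0 (by omega) (by omega) (by unfold cycRel; omega)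
          exact neO Ω hac hcd
    · omega
    · intro h
      have := hinjW (i+us) (i+ut) (by omega) (by omega) h
      omega
  · intro s t hst ht
    rcases s with _ | us <;> rcases t with _ | ut
    · omega
    · show Ω a (w (i + ut)) = 1 ↔ _
      rcases Nat.eq_zero_or_pos ut with rfl | hpos
      · exact iff_of_true (by rw [Nat.add_zero]; exact hβi) (by omega)
      · by_cases hju : i + ut = j
        · exact iff_of_true (by rw [hju]; exact hβj) (by omega)
        · refine iff_of_false ?_ (by omega)
          rw [hmid (i+ut) (by omega) (by omega)]; decide
    · omega
    · show Ω (w (i+us)) (w (i+ut)) = 1 ↔ _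
      rw [hadjW (i+us) (i+ut) (by omega) (by omega)]; unfold cycRel; omega

lemma cyc_left (i : ℕ) (h3 : 3 ≤ i) (hin : i ≤ n - 2)
    (hβi : Ω a (w i) = 1) (hlow : ∀ t, 1 ≤ t → t < i → Ω a (w t) = 0) :
    SolSet Ω (insert (c + a) (B \ {c})) := by
  obtain ⟨hvl, hvr, hca, hanec, hT0, hTB, hΩ0, hwc, hTW⟩ :=
    cyc_basics Ω hΩ hsym ha hc hac hv hn hw0 hmemW hinjW hadjW
  apply sol_cycle' Ω hΩ hsym (i + 1) (by omega)
    (fun t => match t with | 0 => c + a | u+1 => w (u+1))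
  · intro t ht
    rcases t with _ | u
    · exact hT0
    · exact hTW (u+1) (by omega) (by omega)
  · intro s t hst ht
    rcases s with _ | us <;> rcases t with _ | ut
    · omega
    · exact hv _ (hmemW (ut+1) (by omega))
    · omega
    · intro h
      have := hinjW (us+1) (ut+1) (by omega) (by omega) h
      omega
  · intro s t hst ht
    rcases s with _ | us <;> rcases t with _ | ut
    · omega
    · show Ω (c+a) (w (ut+1)) = 1 ↔ _
      have hcc : Ω c (w (ut+1)) = Ω (w 0) (w (ut+1)) := by rw [hw0]
      rcases Nat.eq_zero_or_pos ut with rfl | hpos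
      · refine iff_of_true ?_ (by omega)
        rw [hvl, hcc, (hadjW 0 1 (by omega) (by omega)).2 (by unfold cycRel; omega),
          hlow 1 (by omega) (by omega)]
        decide
      · by_cases hlast : ut + 1 = i
        · refine iff_of_true ?_ (by omega)
          rw [hvl, hcc, hΩ0 0 (ut+1) (by omega) (by omega)
            (by unfold cycRel; omega), hlast, hβi]
          decide
        · refine iff_of_false ?_ (by omega)
          rw [hvl, hcc, hΩ0 0 (ut+1) (by omega) (by omega) (by unfold cycRel; omega),
            hlow (ut+1) (by omega) (by omega)]
          decide
    · omega
    · show Ω (w (us+1)) (w (ut+1)) = 1 ↔ _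
      rw [hadjW (us+1) (ut+1) (by omega) (by omega)]; unfold cycRel; omega

lemma cyc_right (j : ℕ) (h2j : 2 ≤ j) (hjn : j ≤ n - 3)
    (hβj : Ω a (w j) = 1) (hhigh : ∀ t, j < t → t ≤ n - 1 → Ω a (w t) = 0) :
    SolSet Ω (insert (c + a) (B \ {c})) := by
  obtain ⟨hvl, hvr, hca, hanec, hT0, hTB, hΩ0, hwc, hTW⟩ :=
    cyc_basics Ω hΩ hsym ha hc hac hv hn hw0 hmemW hinjW hadjW
  apply sol_cycle' Ω hΩ hsym (n - j + 1) (by omega)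
    (fun t => match t with | 0 => c + a | u+1 => w (j + u))
  · intro t ht
    rcases t with _ | u
    · exact hT0
    · exact hTW (j+u) (by omega) (by omega)
  · intro s t hst ht
    rcases s with _ | us <;> rcases t with _ | ut
    · omega
    · exact hv _ (hmemW (j+ut) (by omega))
    · omega
    · intro h
      have := hinjW (j+us) (j+ut) (by omega) (by omega) h
      omega
  · intro s t hst ht
    rcases s with _ | us <;> rcases t with _ | ut
    · omega
    · show Ω (c+a) (w (j + ut)) = 1 ↔ _
      have hcc : Ω c (w (j+ut)) = Ω (w 0) (w (j+ut)) := by rw [hw0]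
      rcases Nat.eq_zero_or_pos ut with rfl | hpos
      · refine iff_of_true ?_ (by omega)
        simp only [Nat.add_zero] at hcc ⊢
        rw [hvl, hcc, hΩ0 0 j (by omega) (by omega)
          (by unfold cycRel; omega), hβj]
        decide
      · by_cases hlast : j + ut = n - 1
        · refine iff_of_true ?_ (by omega)
          rw [hvl, hcc, (hadjW 0 (j+ut) (by omega) (by omega)).2
            (by rw [hlast]; unfold cycRel; omega),
            hhigh (j+ut) (by omega) (by omega)]
          decide
        · refine iff_of_false ?_ (by omega)
          rw [hvl, hcc, hΩ0 0 (j+ut) (by omega) (by omega) (by unfold cycRel; omega),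
            hhigh (j+ut) (by omega) (by omega)]
          decide
    · omega
    · show Ω (w (j+us)) (w (j+ut)) = 1 ↔ _
      rw [hadjW (j+us) (j+ut) (by omega) (by omega)]; unfold cycRel; omega

omit ha hc hac hv in
lemma cyc_reflect :
    ∃ w' : ℕ → V, w' 0 = c ∧ (∀ t, 1 ≤ t → t ≤ n - 1 → w' t = w (n - t)) ∧
      (∀ t, t ≤ n - 1 → w' t ∈ B) ∧
      (∀ s t, s ≤ n - 1 → t ≤ n - 1 → w' s = w' t → s = t) ∧
      (∀ s t, s ≤ n - 1 → t ≤ n - 1 → (Ω (w' s) (w' t) = 1 ↔ cycRel n s t)) := by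
  refine ⟨fun t => match t with | 0 => c | u+1 => w (n - (u+1)), rfl,
    fun t h1 ht => by rcases t with _ | u; omega; rfl, ?_, ?_, ?_⟩
  · intro t ht
    rcases t with _ | u
    · exact hw0 ▸ hmemW 0 (by omega)
    · exact hmemW (n - (u+1)) (by omega)
  · intro s t hs ht h
    rcases s with _ | us <;> rcases t with _ | ut
    · rfl
    · exfalso
      have := hinjW 0 (n - (ut+1)) (by omega) (by omega) (by rw [hw0]; exact h)
      omega
    · exfalso
      have := hinjW (n - (us+1)) 0 (by omega) (by omega) (by rw [hw0]; exact h)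
      omega
    · have := hinjW (n - (us+1)) (n - (ut+1)) (by omega) (by omega) h
      omega
  · intro s t hs ht
    rcases s with _ | us <;> rcases t with _ | ut
    · show Ω c c = 1 ↔ _
      rw [← hw0, hadjW 0 0 (by omega) (by omega)]
    · show Ω c (w (n - (ut+1))) = 1 ↔ _
      rw [← hw0, hadjW 0 (n - (ut+1)) (by omega) (by omega)]
      unfold cycRel; omega
    · show Ω (w (n - (us+1))) c = 1 ↔ _
      rw [← hw0, hadjW (n - (us+1)) 0 (by omega) (by omega)]
      unfold cycRel; omega
    · show Ω (w (n - (us+1))) (w (n - (ut+1))) = 1 ↔ _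
      rw [hadjW (n - (us+1)) (n - (ut+1)) (by omega) (by omega)]
      unfold cycRel; omega

lemma solve_cycle : SolSet Ω (insert (c + a) (B \ {c})) := by
  classical
  set A : Finset ℕ := (Finset.Icc 1 (n-1)).filter (fun t => Ω a (w t) = 1) with hA
  have hmemA : ∀ t, t ∈ A ↔ (1 ≤ t ∧ t ≤ n - 1 ∧ Ω a (w t) = 1) := by
    intro t; simp [hA, Finset.mem_filter, Finset.mem_Icc, and_assoc]
  have hnotA : ∀ t, 1 ≤ t → t ≤ n - 1 → t ∉ A → Ω a (w t) = 0 := by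
    intro t h1 h2 hnot
    rcases zm2 (Ω a (w t)) with h | h
    · exact h
    · exact absurd ((hmemA t).2 ⟨h1, h2, h⟩) hnot
  rcases Finset.eq_empty_or_nonempty A with hemp | hne
  · apply cyc_clone Ω hΩ hsym ha hc hac hv hn hw0 hmemW hinjW hadjW
    intro t h1 h2
    exact hnotA t h1 h2 (by rw [hemp]; exact Finset.notMem_empty t)
  · set i := A.min' hne with hi
    set j := A.max' hne with hj
    have hiA : i ∈ A := A.min'_mem hne
    have hjA : j ∈ A := A.max'_mem hne
    obtain ⟨hi1, hin, hβi⟩ := (hmemA i).1 hiA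
    obtain ⟨hj1, hjn, hβj⟩ := (hmemA j).1 hjA
    have hijle : i ≤ j := A.min'_le j hjA
    have hlowA : ∀ t, t < i → t ∉ A := fun t hlt hmem => by
      have := A.min'_le t hmem; omega
    have hhighA : ∀ t, j < t → t ∉ A := fun t hlt hmem => by
      have := A.le_max' t hmem; omega
    have hlow : ∀ t, 1 ≤ t → t < i → Ω a (w t) = 0 :=
      fun t h1 h2 => hnotA t h1 (by omega) (hlowA t h2)
    have hhigh : ∀ t, j < t → t ≤ n - 1 → Ω a (w t) = 0 :=
      fun t h1 h2 => hnotA t (by omega) h2 (hhighA t h1)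
    by_cases hgap : ∃ t, i < t ∧ t < j ∧ t ∉ A
    · obtain ⟨t0, ht1, ht2, ht3⟩ := hgap
      have hne1 : (A.filter (· < t0)).Nonempty := ⟨i, Finset.mem_filter.2 ⟨hiA, ht1⟩⟩
      have hne2 : (A.filter (t0 < ·)).Nonempty := ⟨j, Finset.mem_filter.2 ⟨hjA, ht2⟩⟩
      set i' := (A.filter (· < t0)).max' hne1 with hi'
      set j' := (A.filter (t0 < ·)).min' hne2 with hj'
      have hi'A : i' ∈ A ∧ i' < t0 :=
        Finset.mem_filter.1 ((A.filter (· < t0)).max'_mem hne1)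
      have hj'A : j' ∈ A ∧ t0 < j' :=
        Finset.mem_filter.1 ((A.filter (t0 < ·)).min'_mem hne2)
      obtain ⟨hi'1, hi'n, hβi'⟩ := (hmemA i').1 hi'A.1
      obtain ⟨hj'1, hj'n, hβj'⟩ := (hmemA j').1 hj'A.1
      apply cyc_gap Ω hΩ hsym ha hc hac hv hn hw0 hmemW hinjW hadjW i' j'
        hi'1 (by omega) hj'n hβi' hβj'
      intro t h1 h2
      refine hnotA t (by omega) (by omega) ?_
      intro htA
      rcases lt_trichotomy t t0 with h | h | h
      · have := (A.filter (· < t0)).le_max' t (Finset.mem_filter.2 ⟨htA, h⟩)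
        omega
      · exact ht3 (h ▸ htA)
      · have := (A.filter (t0 < ·)).min'_le t (Finset.mem_filter.2 ⟨htA, h⟩)
        omega
    · push_neg at hgap
      have hint : ∀ t, i ≤ t → t ≤ j → Ω a (w t) = 1 := by
        intro t h1 h2
        rcases eq_or_lt_of_le h1 with rfl | h1'
        · exact hβi
        rcases eq_or_lt_of_le h2 with rfl | h2'
        · exact hβj
        · exact ((hmemA t).1 (hgap t h1' h2')).2.2
      by_cases h3j : i + 2 ≤ j
      · exact cyc_triple Ω hΩ hsym ha hc hac hv hn hw0 hmemW hinjW hadjW i hi1 (by omega)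
          (hint i le_rfl (by omega)) (hint (i+1) (by omega) (by omega))
          (hint (i+2) (by omega) (by omega))
      by_cases h11 : j = 1
      · apply cyc_single1 Ω hΩ hsym ha hc hac hv hn hw0 hmemW hinjW hadjW
        · have : i = 1 := by omega
          exact this ▸ hβi
        · intro t h1 h2; exact hhigh t (by omega) h2
      by_cases h12 : i = 1 ∧ j = 2
      · refine cyc_pair1 Ω hΩ hsym ha hc hac hv hn hw0 hmemW hinjW hadjW ?_ ?_
        · have h := hβi; rw [h12.1] at h; exact h
        · have h := hβj; rw [h12.2] at h; exact h
      by_cases hL : 3 ≤ i ∧ i ≤ n - 2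
      · exact cyc_left Ω hΩ hsym ha hc hac hv hn hw0 hmemW hinjW hadjW i hL.1 hL.2 hβi hlow
      by_cases hR : 2 ≤ j ∧ j ≤ n - 3
      · exact cyc_right Ω hΩ hsym ha hc hac hv hn hw0 hmemW hinjW hadjW j hR.1 hR.2 hβj hhigh
      -- reflection cases and small leftovers
      obtain ⟨w', hw0', hweq, hmemW', hinjW', hadjW'⟩ :=
        cyc_reflect Ω hΩ hsym hn hw0 hmemW hinjW hadjW
      by_cases hS : i = n - 1
      · apply cyc_single1 Ω hΩ hsym ha hc hac hv hn hw0' hmemW' hinjW' hadjW'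
        · rw [hweq 1 (by omega) (by omega)]
          have : n - 1 = i := hS.symm
          rw [this]; exact hβi
        · intro t h1 h2
          rw [hweq t (by omega) h2]
          exact hlow (n - t) (by omega) (by omega)
      by_cases hP : i = n - 2 ∧ j = n - 1
      · apply cyc_pair1 Ω hΩ hsym ha hc hac hv hn hw0' hmemW' hinjW' hadjW'
        · rw [hweq 1 (by omega) (by omega), show n - 1 = j by omega]; exact hβj
        · rw [hweq 2 (by omega) (by omega), show n - 2 = i by omega]; exact hβi
      · have hcase : (n = 4 ∧ i = 2 ∧ j = 2) ∨ (n = 5 ∧ i = 2 ∧ j = 3) := by omega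
        have hα1 : Ω a (w 1) = 0 := hlow 1 (by omega) (by omega)
        have hα2 : Ω a (w 2) = 1 := by
          rcases hcase with ⟨-, h2, -⟩ | ⟨-, h2, -⟩ <;> (have h := hβi; rw [h2] at h; exact h)
        apply cyc_mid Ω hΩ hsym ha hc hac hv hn hw0 hmemW hinjW hadjW
          (by omega) hα1 hα2
        rcases hcase with ⟨h4, hi2, hj2⟩ | ⟨h5, hi2, hj3⟩
        · have hc3 : Ω c (w 3) = 1 := by
            rw [← hw0]
            exact (hadjW 0 3 (by omega) (by omega)).2 (by unfold cycRel; omega)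
          have ha3 : Ω a (w 3) = 0 := hhigh 3 (by omega) (by omega)
          rw [hc3, ha3]; decide
        · have hc3 : Ω c (w 3) = 0 := by
            rw [← hw0]
            rcases zm2 (Ω (w 0) (w 3)) with h | h
            · exact h
            · have := (hadjW 0 3 (by omega) (by omega)).1 h
              unfold cycRel at this; omega
          have ha3 : Ω a (w 3) = 1 := by have h := hβj; rw [hj3] at h; exact h
          rw [hc3, ha3]; decide

end CycleLemmas
end S14e

section S14f
open Function SimpleGraph

variable {V : Type*} [AddCommGroup V] [Module (ZMod 2) V]

lemma cycle_setup {X : Set V} (Ω : BForm V) (hΩ : ∀ x : V, Ω x x = 0)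
    (hsym : ∀ x y : V, Ω x y = Ω y x) {n : ℕ} (hn : 4 ≤ n)
    (e : Gr Ω X ≃g CycleGraph n) {c : V} (hcX : c ∈ X) :
    ∃ w : ℕ → V, w 0 = c ∧ (∀ t, t ≤ n - 1 → w t ∈ X) ∧
      (∀ s t, s ≤ n - 1 → t ≤ n - 1 → w s = w t → s = t) ∧
      (∀ s t, s ≤ n - 1 → t ≤ n - 1 → (Ω (w s) (w t) = 1 ↔ cycRel n s t)) := by
  obtain ⟨u, huinj, humem, hucov, huadj⟩ := gr_extract Ω hΩ hsym e
  obtain ⟨k, hk⟩ := hucov c hcX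
  have hnpos : 0 < n := by omega
  have hcancel : ∀ s t : ℕ, s ≤ n-1 → t ≤ n-1 →
      (k.val + s) % n = (k.val + t) % n → s = t := by
    intro s t hs ht h
    have h2 : s ≡ t [MOD n] := Nat.ModEq.add_left_cancel' k.val h
    have h3 : s % n = t % n := h2
    rw [Nat.mod_eq_of_lt (by omega), Nat.mod_eq_of_lt (by omega)] at h3
    exact h3
  have E0 : ∀ x y : ℕ, x ≤ n-1 → y ≤ n-1 →
      ((k.val + y) % n = ((k.val + x) % n + 1) % n ↔ y = (x+1) % n) := by
    intro x y hx hy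
    rw [Nat.mod_add_mod]
    constructor
    · intro h
      have h2 : y ≡ x + 1 [MOD n] := Nat.ModEq.add_left_cancel' k.val h
      have h3 : y % n = (x+1) % n := h2
      rw [Nat.mod_eq_of_lt (by omega)] at h3
      exact h3
    · intro h
      have h2 : y ≡ x + 1 [MOD n] := by
        show y % n = (x+1) % n
        rw [Nat.mod_eq_of_lt (by omega)]
        exact h
      exact Nat.ModEq.add_left k.val h2
  refine ⟨fun t => u ⟨(k.val + t) % n, Nat.mod_lt _ hnpos⟩, ?_, ?_, ?_, ?_⟩
  · show u ⟨(k.val + 0) % n, _⟩ = c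
    have heq : (⟨(k.val + 0) % n, Nat.mod_lt _ hnpos⟩ : Fin n) = k := by
      apply Fin.ext
      show (k.val + 0) % n = k.val
      rw [Nat.add_zero]
      exact Nat.mod_eq_of_lt k.isLt
    rw [heq]; exact hk
  · intro t ht; exact humem _
  · intro s t hs ht h
    exact hcancel s t hs ht (congrArg Fin.val (huinj h))
  · intro s t hs ht
    rw [huadj, cycleGraph_adj_iff hnpos]
    show ((k.val + s) % n ≠ (k.val + t) % n ∧
      cycRel n ((k.val + s) % n) ((k.val + t) % n)) ↔ cycRel n s t
    have hs' : (k.val + s) % n ≤ n - 1 := by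
      have := Nat.mod_lt (k.val + s) hnpos; omega
    have ht' : (k.val + t) % n ≤ n - 1 := by
      have := Nat.mod_lt (k.val + t) hnpos; omega
    have A1 := mod_succ_iff (s := (k.val+s) % n) (t := (k.val+t) % n) hnpos
      (by omega) (by omega)
    have A2 := mod_succ_iff (s := (k.val+t) % n) (t := (k.val+s) % n) hnpos
      (by omega) (by omega)
    have B1 := mod_succ_iff (s := s) (t := t) hnpos (by omega) (by omega)
    have B2 := mod_succ_iff (s := t) (t := s) hnpos (by omega) (by omega)
    have C1 := E0 s t (by omega) (by omega)
    have C2 := E0 t s (by omega) (by omega)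
    have F1 : ((k.val + t) % n = (k.val + s) % n + 1 ∨
        ((k.val + s) % n = n - 1 ∧ (k.val + t) % n = 0)) ↔
        (t = s + 1 ∨ (s = n - 1 ∧ t = 0)) := A1.symm.trans (C1.trans B1)
    have F2 : ((k.val + s) % n = (k.val + t) % n + 1 ∨
        ((k.val + t) % n = n - 1 ∧ (k.val + s) % n = 0)) ↔
        (s = t + 1 ∨ (t = n - 1 ∧ s = 0)) := A2.symm.trans (C2.trans B2)
    constructor
    · rintro ⟨hne', hrel⟩
      unfold cycRel at hrel ⊢
      rcases hrel with h | h | h | h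
      · rcases F1.1 (Or.inl h) with h' | h'
        · exact Or.inl h'
        · exact Or.inr (Or.inr (Or.inr ⟨h'.2, h'.1⟩))
      · rcases F2.1 (Or.inl h) with h' | h'
        · exact Or.inr (Or.inl h')
        · exact Or.inr (Or.inr (Or.inl ⟨h'.2, h'.1⟩))
      · rcases F2.1 (Or.inr ⟨h.2, h.1⟩) with h' | h'
        · exact Or.inr (Or.inl h')
        · exact Or.inr (Or.inr (Or.inl ⟨h'.2, h'.1⟩))
      · rcases F1.1 (Or.inr ⟨h.2, h.1⟩) with h' | h'
        · exact Or.inl h'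
        · exact Or.inr (Or.inr (Or.inr ⟨h'.2, h'.1⟩))
    · intro hrel
      have hst : s ≠ t := by unfold cycRel at hrel; omega
      refine ⟨fun h => hst (hcancel s t (by omega) (by omega) h), ?_⟩
      unfold cycRel at hrel ⊢
      rcases hrel with h | h | h | h
      · rcases F1.2 (Or.inl h) with h' | h'
        · exact Or.inl h'
        · exact Or.inr (Or.inr (Or.inr ⟨h'.2, h'.1⟩))
      · rcases F2.2 (Or.inl h) with h' | h'
        · exact Or.inr (Or.inl h')
        · exact Or.inr (Or.inr (Or.inl ⟨h'.2, h'.1⟩))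
      · rcases F2.2 (Or.inr ⟨h.2, h.1⟩) with h' | h'
        · exact Or.inr (Or.inl h')
        · exact Or.inr (Or.inr (Or.inl ⟨h'.2, h'.1⟩))
      · rcases F1.2 (Or.inr ⟨h.2, h.1⟩) with h' | h'
        · exact Or.inl h'
        · exact Or.inr (Or.inr (Or.inr ⟨h'.2, h'.1⟩))

end S14f


/-- If `Gr(B)` has an induced subgraph isomorphic to a member of `F`, then
for any `a, c ∈ B` with `Ω(a,c) = 1`, the graph of `φ_{c,a}(B)` also has an induced
subgraph isomorphic to a member of `F`. -/
theorem stmt_14 {V : Type*} [AddCommGroup V] [Module (ZMod 2) V]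
    [FiniteDimensional (ZMod 2) V]
    (Ω : BForm V) (hΩ : ∀ x : V, Ω x x = 0)
    (B : Set V) (hli : LinearIndependent (ZMod 2) (Subtype.val : B → V))
    (hF : ∃ X ⊆ B, InF (Gr Ω X))
    (a c : V) (ha : a ∈ B) (hc : c ∈ B) (hac : Ω a c = 1) :
    ∃ X' ⊆ insert (c + a) (B \ {c}), InF (Gr Ω X') := by

  have hsym : ∀ x y : V, Ω x y = Ω y x := by
    intro x y
    have h : Ω x y + Ω y x = 0 := by
      have h0 := hΩ (x + y)
      simp only [map_add, LinearMap.add_apply, hΩ, zero_add, add_zero] at h0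
      rw [add_comm] at h0
      exact h0
    rcases zm2 (Ω x y) with h1 | h1 <;> rcases zm2 (Ω y x) with h2 | h2 <;>
      rw [h1, h2] at h ⊢ <;> first | rfl | (exact absurd h (by decide))
  have hanec : a ≠ c := fun h => by
    rw [h, hΩ] at hac; exact absurd hac (by decide)
  have hv : ∀ y ∈ B, c + a ≠ y := vsum_ne B hli ha hc hanec
  obtain ⟨X, hXB, hF⟩ := hF
  show SolSet Ω (insert (c + a) (B \ {c}))
  by_cases hcX : c ∈ X
  · rcases hF with he | he | ⟨m, hm, he⟩
    · -- claw case
      obtain ⟨e⟩ := he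
      obtain ⟨ci⟩ := clawG_iso
      obtain ⟨u, huinj, humem, hucov, huadj⟩ := gr_extract Ω hΩ hsym (e.trans ci.symm)
      have hE1 : ∀ i j : Fin 4, ClawG.Adj i j → Ω (u i) (u j) = 1 :=
        fun i j h => (huadj i j).2 h
      have hE0 : ∀ i j : Fin 4, ¬ ClawG.Adj i j → Ω (u i) (u j) = 0 := by
        intro i j h
        rcases zm2 (Ω (u i) (u j)) with h0 | h0
        · exact h0
        · exact absurd ((huadj i j).1 h0) h
      have hne : ∀ i j : Fin 4, i ≠ j → u i ≠ u j := fun i j h hh => h (huinj hh)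
      have huB : ∀ i, u i ∈ B := fun i => hXB (humem i)
      obtain ⟨ic, hic⟩ := hucov c hcX
      fin_cases ic
      · exact solve_claw_center Ω hΩ hsym ha hc hac hv (huB 1) (huB 2) (huB 3)
          (by rw [← hic]; exact hne 1 0 (by decide))
          (by rw [← hic]; exact hne 2 0 (by decide))
          (by rw [← hic]; exact hne 3 0 (by decide))
          (hne 1 2 (by decide)) (hne 1 3 (by decide)) (hne 2 3 (by decide))
          (by rw [← hic]; exact hE1 0 1 (by decide))
          (by rw [← hic]; exact hE1 0 2 (by decide))
          (by rw [← hic]; exact hE1 0 3 (by decide))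
          (hE0 1 2 (by decide)) (hE0 1 3 (by decide)) (hE0 2 3 (by decide))
      · exact solve_claw_leaf Ω hΩ hsym ha hc hac hv (huB 0) (huB 2) (huB 3)
          (by rw [← hic]; exact hne 0 1 (by decide))
          (by rw [← hic]; exact hne 2 1 (by decide))
          (by rw [← hic]; exact hne 3 1 (by decide))
          (hne 0 2 (by decide)) (hne 0 3 (by decide)) (hne 2 3 (by decide))
          (by rw [← hic]; exact hE1 1 0 (by decide))
          (hE1 0 2 (by decide)) (hE1 0 3 (by decide))
          (by rw [← hic]; exact hE0 1 2 (by decide))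
          (by rw [← hic]; exact hE0 1 3 (by decide))
          (hE0 2 3 (by decide))
      · exact solve_claw_leaf Ω hΩ hsym ha hc hac hv (huB 0) (huB 1) (huB 3)
          (by rw [← hic]; exact hne 0 2 (by decide))
          (by rw [← hic]; exact hne 1 2 (by decide))
          (by rw [← hic]; exact hne 3 2 (by decide))
          (hne 0 1 (by decide)) (hne 0 3 (by decide)) (hne 1 3 (by decide))
          (by rw [← hic]; exact hE1 2 0 (by decide))
          (hE1 0 1 (by decide)) (hE1 0 3 (by decide))
          (by rw [← hic]; exact hE0 2 1 (by decide))
          (by rw [← hic]; exact hE0 2 3 (by decide))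
          (hE0 1 3 (by decide))
      · exact solve_claw_leaf Ω hΩ hsym ha hc hac hv (huB 0) (huB 1) (huB 2)
          (by rw [← hic]; exact hne 0 3 (by decide))
          (by rw [← hic]; exact hne 1 3 (by decide))
          (by rw [← hic]; exact hne 2 3 (by decide))
          (hne 0 1 (by decide)) (hne 0 2 (by decide)) (hne 1 2 (by decide))
          (by rw [← hic]; exact hE1 3 0 (by decide))
          (hE1 0 1 (by decide)) (hE1 0 2 (by decide))
          (by rw [← hic]; exact hE0 3 1 (by decide))
          (by rw [← hic]; exact hE0 3 2 (by decide))
          (hE0 1 2 (by decide))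
    · -- diamond case
      obtain ⟨e⟩ := he
      obtain ⟨u, huinj, humem, hucov, huadj⟩ := gr_extract Ω hΩ hsym e
      have hE1 : ∀ i j : Fin 4, TwoTrianglesGraph.Adj i j → Ω (u i) (u j) = 1 :=
        fun i j h => (huadj i j).2 h
      have hE0 : ∀ i j : Fin 4, ¬ TwoTrianglesGraph.Adj i j → Ω (u i) (u j) = 0 := by
        intro i j h
        rcases zm2 (Ω (u i) (u j)) with h0 | h0
        · exact h0
        · exact absurd ((huadj i j).1 h0) h
      have hne : ∀ i j : Fin 4, i ≠ j → u i ≠ u j := fun i j h hh => h (huinj hh)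
      have huB : ∀ i, u i ∈ B := fun i => hXB (humem i)
      obtain ⟨ic, hic⟩ := hucov c hcX
      fin_cases ic
      · exact solve_diam_p Ω hΩ hsym ha hc hac hv (huB 1) (huB 2) (huB 3)
          (by rw [← hic]; exact hne 1 0 (by decide))
          (by rw [← hic]; exact hne 2 0 (by decide))
          (by rw [← hic]; exact hne 3 0 (by decide))
          (hne 1 2 (by decide)) (hne 1 3 (by decide)) (hne 2 3 (by decide))
          (by rw [← hic]; exact hE1 0 1 (by decide))
          (by rw [← hic]; exact hE1 0 2 (by decide))
          (by rw [← hic]; exact hE1 0 3 (by decide))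
          (hE1 1 2 (by decide)) (hE1 1 3 (by decide)) (hE0 2 3 (by decide))
      · exact solve_diam_p Ω hΩ hsym ha hc hac hv (huB 0) (huB 2) (huB 3)
          (by rw [← hic]; exact hne 0 1 (by decide))
          (by rw [← hic]; exact hne 2 1 (by decide))
          (by rw [← hic]; exact hne 3 1 (by decide))
          (hne 0 2 (by decide)) (hne 0 3 (by decide)) (hne 2 3 (by decide))
          (by rw [← hic]; exact hE1 1 0 (by decide))
          (by rw [← hic]; exact hE1 1 2 (by decide))
          (by rw [← hic]; exact hE1 1 3 (by decide))
          (hE1 0 2 (by decide)) (hE1 0 3 (by decide)) (hE0 2 3 (by decide))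
      · exact solve_diam_r Ω hΩ hsym ha hc hac hv (huB 0) (huB 1) (huB 3)
          (by rw [← hic]; exact hne 0 2 (by decide))
          (by rw [← hic]; exact hne 1 2 (by decide))
          (by rw [← hic]; exact hne 3 2 (by decide))
          (hne 0 1 (by decide)) (hne 0 3 (by decide)) (hne 1 3 (by decide))
          (by rw [← hic]; exact hE1 2 0 (by decide))
          (by rw [← hic]; exact hE1 2 1 (by decide))
          (by rw [← hic]; exact hE0 2 3 (by decide))
          (hE1 0 1 (by decide)) (hE1 0 3 (by decide)) (hE1 1 3 (by decide))
      · exact solve_diam_r Ω hΩ hsym ha hc hac hv (huB 0) (huB 1) (huB 2)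
          (by rw [← hic]; exact hne 0 3 (by decide))
          (by rw [← hic]; exact hne 1 3 (by decide))
          (by rw [← hic]; exact hne 2 3 (by decide))
          (hne 0 1 (by decide)) (hne 0 2 (by decide)) (hne 1 2 (by decide))
          (by rw [← hic]; exact hE1 3 0 (by decide))
          (by rw [← hic]; exact hE1 3 1 (by decide))
          (by rw [← hic]; exact hE0 3 2 (by decide))
          (hE1 0 1 (by decide)) (hE1 0 2 (by decide)) (hE1 1 2 (by decide))
    · -- cycle case
      obtain ⟨e⟩ := he
      obtain ⟨w, hw0, hmemX, hinjW, hadjW⟩ := cycle_setup Ω hΩ hsym hm e hcX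
      exact solve_cycle Ω hΩ hsym ha hc hac hv hm hw0
        (fun t ht => hXB (hmemX t ht)) hinjW hadjW
  · refine ⟨X, fun y hy => Set.mem_insert_of_mem _ ⟨hXB hy, ?_⟩, hF⟩
    intro h
    exact hcX (h ▸ hy)
end

section
/- Let B⊆V be a linearly independent subset with Gr(B) connected, U=span(B), and suppose there exist u∈U₀₀₀ and v∈V with Ω(v,u)=1. Then no vector of the coset v+U is fixed by every element of Γ_B. -/
open scoped BigOperators

variable {V : Type*} [AddCommGroup V] [Module (ZMod 2) V]

/-- Let `B` be linearly independent with `Gr(B)` connected and `U = span(B)`.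
If there are `u ∈ U₀₀₀` and `v ∈ V` with `Ω(v,u) = 1`, then no vector of the coset
`v + U` is fixed by every element of `Γ_B`. -/
theorem stmt_15 {V : Type*} [AddCommGroup V] [Module (ZMod 2) V]
    [FiniteDimensional (ZMod 2) V]
    (Ω : BForm V) (hΩ : ∀ x : V, Ω x x = 0)
    (B : Set V) (hli : LinearIndependent (ZMod 2) (Subtype.val : B → V))
    (hconn : (Gr Ω B).Connected)
    (u : V) (hu : u ∈ U000set Ω B) (v : V) (hvu : Ω v u = 1) :
    ∀ z : V, z + v ∈ Submodule.span (ZMod 2) B → ∃ g ∈ Gamma Ω B, g z ≠ z := by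
  intro z hz
  -- symmetry of Ω
  have hsymm : ∀ a b : V, Ω a b = Ω b a := by
    intro a b
    have h := hΩ (a + b)
    simp only [map_add, LinearMap.add_apply, hΩ] at h
    generalize Ω a b = x at h ⊢
    generalize Ω b a = y at h ⊢
    revert x y; decide
  -- there exists b ∈ B with Ω z b ≠ 0
  obtain ⟨hu_span, hu0, -⟩ := hu
  have hΩzu : Ω z u = 1 := by
    have h1 : Ω u (z + v) = 0 := hu0 _ hz
    have h2 : Ω (z + v) u = 0 := by rw [hsymm]; exact h1
    simp only [map_add, LinearMap.add_apply] at h2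
    have : Ω z u = -Ω v u := by linear_combination h2
    rw [this, hvu]; decide
  by_cases hb : ∃ b ∈ B, Ω z b ≠ 0
  · obtain ⟨b, hbB, hzb⟩ := hb
    have hzb1 : Ω z b = 1 := by
      have : Ω z b = 0 ∨ Ω z b = 1 := by
        generalize Ω z b = c at *; revert c; decide
      tauto
    -- the transvection at b
    have hΩbb : Ω b b = 0 := hΩ b
    set f : V →ₗ[ZMod 2] V :=
      { toFun := fun x => x + Ω x b • b
        map_add' := by intro x y; simp [add_smul]; abel
        map_smul' := by
          intro c x
          simp only [map_smul, LinearMap.smul_apply, smul_eq_mul, RingHom.id_apply,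
            smul_add, mul_smul] } with hf
    have hinv : Function.Involutive f := by
      intro x
      show (x + Ω x b • b) + Ω (x + Ω x b • b) b • b = x
      have hcc : ∀ c : ZMod 2, c + c = 0 := by decide
      simp only [map_add, LinearMap.add_apply, map_smul, LinearMap.smul_apply, hΩbb,
        smul_eq_mul, mul_zero, add_zero]
      rw [add_assoc, ← add_smul, hcc, zero_smul, add_zero]
    set g : V ≃ₗ[ZMod 2] V := LinearEquiv.ofInvolutive f hinv with hg
    have hgmem : g ∈ Gamma Ω B := by
      apply Subgroup.subset_closure
      exact ⟨b, hbB, fun x => rfl⟩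
    refine ⟨g, hgmem, ?_⟩
    have hb0 : b ≠ 0 := by
      have := hli.ne_zero ⟨b, hbB⟩
      simpa using this
    have : g z = z + b := by
      show f z = z + b
      simp only [hf, LinearMap.coe_mk, AddHom.coe_mk, hzb1, one_smul]
    rw [this]
    intro h
    exact hb0 (add_eq_left.mp h)
  · -- contradiction: Ω z vanishes on B hence on span B, but Ω z u = 1
    push_neg at hb
    have hspan : ∀ w ∈ Submodule.span (ZMod 2) B, Ω z w = 0 := by
      intro w hw
      induction hw using Submodule.span_induction with
      | mem x hx => exact hb x hx
      | zero => simp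
      | add x y _ _ hx hy => simp [hx, hy]
      | smul c x _ hx => simp [hx]
    have := hspan u hu_span
    rw [hΩzu] at this
    exact absurd this one_ne_zero
end

section
/- Let B={a₁,…,a_m,c₁,…,c_k} (m≥2, k≥1) be a basis of V whose graph Gr(B) is a tree of type D_{m,k} with edges a_i–a_{i+1} (1≤i≤m−1) and a_m–c_j (1≤j≤k). Then: (1) if m is odd, V₀=V₀₀=V₀₀₀=span{c₁+c₂, c₁+c₃, …, c₁+c_k}; (2) if m=2, V₀=V₀₀=V₀₀₀=span{a₁+c₁, c₁+c₂, …, c₁+c_k}; (3) if m>2 and m≡2 (mod 4), then V₀₀₀=span{c₁+c₂, …, c₁+c_k} and V₀=V₀₀=span(V₀₀₀∪{a₁+a₃+⋯+a_{m−1}+c₁}); (4) if m>2 and m≡0 (mod 4), then V₀₀=V₀₀₀=span{c₁+c₂, …, c₁+c_k} and V₀=span(V₀₀₀∪{a₁+a₃+⋯+a_{m−1}+c₁}). -/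
open scoped BigOperators

variable {V : Type*} [AddCommGroup V] [Module (ZMod 2) V]

section DmkKernels

variable {V : Type*} [AddCommGroup V] [Module (ZMod 2) V]

/-- The set `{c₁ + c₂, …, c₁ + c_k}`. -/
def cDiffs {k : ℕ} (hk : 0 < k) (c : Fin k → V) : Set V :=
  {y | ∃ j : Fin k, (j : ℕ) ≠ 0 ∧ y = c ⟨0, hk⟩ + c j}

/-- The vector `a₁ + a₃ + ⋯ + a_{m−1}` (odd positions, i.e. even `Fin` indices). -/
def oddSum {m : ℕ} (a : Fin m → V) : V :=
  ∑ i ∈ Finset.univ.filter (fun i : Fin m => (i : ℕ) % 2 = 0), a i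

namespace S16

lemma zmod2cases (r : ZMod 2) : r = 0 ∨ r = 1 := by revert r; decide

/-- boundary count of a profile, looking at positions 0..m+2 -/
def Dcount (m : ℕ) (ψ : ℕ → ZMod 2) : ℕ :=
  ((Finset.range (m+2)).filter (fun i => ψ i ≠ ψ (i+1))).card

lemma Dcount_congr {m : ℕ} {ψ ψ' : ℕ → ZMod 2} (h : ∀ j, ψ j = ψ' j) :
    Dcount m ψ = Dcount m ψ' := by
  unfold Dcount
  congr 1
  apply Finset.filter_congr
  intro j _
  rw [h j, h (j+1)]

lemma pairhelp : ∀ u w y : ZMod 2,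
    ((if u ≠ y + (u+w) then 1 else 0) + (if y + (u+w) ≠ w then 1 else 0) : ℕ) =
    (if u ≠ y then 1 else 0) + (if y ≠ w then 1 else 0) := by decide

lemma Dcount_flip (m p : ℕ) (hp1 : 1 ≤ p) (hp2 : p ≤ m+1) (ψ : ℕ → ZMod 2) :
    Dcount m (fun j => ψ j + (ψ (p-1) + ψ (p+1)) * (if j = p then 1 else 0)) = Dcount m ψ := by
  classical
  set ψ' : ℕ → ZMod 2 := fun j => ψ j + (ψ (p-1) + ψ (p+1)) * (if j = p then 1 else 0) with hψ'
  have hne : ∀ j, j ≠ p → ψ' j = ψ j := by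
    intro j hj; simp [hψ', hj]
  have hpv : ψ' p = ψ p + (ψ (p-1) + ψ (p+1)) := by simp [hψ']
  have hsub : ({p-1, p} : Finset ℕ) ⊆ Finset.range (m+2) := by
    intro j hj
    simp only [Finset.mem_insert, Finset.mem_singleton] at hj
    simp only [Finset.mem_range]
    omega
  unfold Dcount
  rw [Finset.card_filter, Finset.card_filter, ← Finset.sum_sdiff hsub, ← Finset.sum_sdiff hsub]
  congr 1
  · apply Finset.sum_congr rfl
    intro j hj
    simp only [Finset.mem_sdiff, Finset.mem_insert, Finset.mem_singleton] at hj
    have h1 : j ≠ p := fun h => hj.2 (Or.inr h)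
    have h2 : j + 1 ≠ p := fun h => hj.2 (Or.inl (by omega))
    rw [hne j h1, hne (j+1) h2]
  · rw [Finset.sum_pair (by omega : p - 1 ≠ p), Finset.sum_pair (by omega : p - 1 ≠ p)]
    have e1 : p - 1 + 1 = p := by omega
    rw [e1, hne (p-1) (by omega), hne (p+1) (by omega), hpv]
    exact pairhelp (ψ (p-1)) (ψ (p+1)) (ψ p)

lemma Dcount_add_le (m : ℕ) (ψ₁ ψ₂ : ℕ → ZMod 2) :
    Dcount m (fun j => ψ₁ j + ψ₂ j) ≤ Dcount m ψ₁ + Dcount m ψ₂ := by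
  classical
  have key : ∀ x y z w : ZMod 2, x + z ≠ y + w → x ≠ y ∨ z ≠ w := by decide
  unfold Dcount
  refine le_trans (Finset.card_le_card ?_) (Finset.card_union_le _ _)
  intro j hj
  simp only [Finset.mem_filter, Finset.mem_range, Finset.mem_union] at hj ⊢
  rcases key _ _ _ _ hj.2 with h | h
  · exact Or.inl ⟨hj.1, h⟩
  · exact Or.inr ⟨hj.1, h⟩

lemma Dcount_single (m p : ℕ) (hp1 : 1 ≤ p) (hp2 : p ≤ m+1) :
    Dcount m (fun j => if j = p then 1 else 0) = 2 := by
  classical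
  unfold Dcount
  have : (Finset.range (m+2)).filter
      (fun i => (if i = p then (1:ZMod 2) else 0) ≠ (if i+1 = p then 1 else 0)) = {p-1, p} := by
    ext j
    simp only [Finset.mem_filter, Finset.mem_range, Finset.mem_insert, Finset.mem_singleton]
    constructor
    · rintro ⟨hj, hne⟩
      by_cases h1 : j = p
      · right; exact h1
      · by_cases h2 : j + 1 = p
        · left; omega
        · simp [h1, h2] at hne
    · intro h
      rcases h with h | h
      · subst h
        constructor
        · omega
        · have e1 : p - 1 + 1 = p := by omega
          rw [e1]
          simp only [if_pos rfl]
          rw [if_neg (by omega)]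
          decide
      · subst h
        refine ⟨by omega, ?_⟩
        rw [if_pos rfl, if_neg (by omega)]
        decide
  rw [this, Finset.card_pair (by omega)]

end S16
namespace S16

lemma addself (x : V) : x + x = 0 := by
  have h : (2 : ZMod 2) • x = x + x := two_smul _ x
  have h2 : (2 : ZMod 2) = 0 := by decide
  rw [h2, zero_smul] at h
  exact h.symm

lemma eqz {u w : ZMod 2} (h : u + w = 0) : u = w := by revert h; revert u w; decide

def tauL (Ω : BForm V) (v : V) : V →ₗ[ZMod 2] V :=
  LinearMap.id + LinearMap.smulRight (Ω.flip v) v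

lemma tauL_apply (Ω : BForm V) (v x : V) : tauL Ω v x = x + Ω x v • v := rfl

lemma tauL_invol (Ω : BForm V) (hΩ : ∀ x, Ω x x = 0) (v : V) :
    Function.Involutive (tauL Ω v) := by
  intro x
  rw [tauL_apply, tauL_apply]
  have h1 : Ω (x + Ω x v • v) v = Ω x v := by
    rw [map_add, LinearMap.add_apply, map_smul, LinearMap.smul_apply, hΩ, smul_zero, add_zero]
  rw [h1, add_assoc, addself, add_zero]

def tau (Ω : BForm V) (hΩ : ∀ x, Ω x x = 0) (v : V) : V ≃ₗ[ZMod 2] V :=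
  LinearEquiv.ofInvolutive (tauL Ω v) (tauL_invol Ω hΩ v)

lemma tau_apply (Ω : BForm V) (hΩ : ∀ x, Ω x x = 0) (v x : V) :
    tau Ω hΩ v x = x + Ω x v • v := rfl

end S16
open scoped BigOperators

namespace S16

variable {V : Type*} [AddCommGroup V] [Module (ZMod 2) V]

/-- profile map: positions 1..m are a-coordinates, position m+1 is the sum of c-coordinates -/
noncomputable def phi {m k : ℕ} (bas : Module.Basis (Fin m ⊕ Fin k) (ZMod 2) V) (x : V) (j : ℕ) : ZMod 2 :=
  if h : 1 ≤ j ∧ j ≤ m then bas.repr x (Sum.inl ⟨j-1, by omega⟩)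
  else if j = m + 1 then ∑ j' : Fin k, bas.repr x (Sum.inr j') else 0

variable {m k : ℕ} {a : Fin m → V} {c : Fin k → V}
  (bas : Module.Basis (Fin m ⊕ Fin k) (ZMod 2) V) (hbas : ⇑bas = Sum.elim a c)

lemma phi_add (x y : V) (j : ℕ) : phi bas (x + y) j = phi bas x j + phi bas y j := by
  unfold phi
  split_ifs with h1 h2 <;> simp [Finset.sum_add_distrib]

lemma phi_smul (r : ZMod 2) (x : V) (j : ℕ) : phi bas (r • x) j = r * phi bas x j := by
  unfold phi
  split_ifs with h1 h2 <;> simp [Finset.mul_sum]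

lemma phi_zero (j : ℕ) : phi bas (0 : V) j = 0 := by
  unfold phi
  split_ifs <;> simp

lemma phi_sum {ι : Type*} (s : Finset ι) (f : ι → V) (j : ℕ) :
    phi bas (∑ i ∈ s, f i) j = ∑ i ∈ s, phi bas (f i) j := by
  classical
  induction s using Finset.induction_on with
  | empty => simp [phi_zero]
  | insert _ _ hi ih => rename_i i s; rw [Finset.sum_insert hi, Finset.sum_insert hi, phi_add, ih]

lemma phi_big (x : V) (j : ℕ) (hj : m + 2 ≤ j) : phi bas x j = 0 := by
  unfold phi
  rw [dif_neg (by omega), if_neg (by omega)]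

lemma phi_coord (x : V) (i : Fin m) : phi bas x ((i : ℕ) + 1) = bas.repr x (Sum.inl i) := by
  have hi : (i : ℕ) < m := i.isLt
  unfold phi
  rw [dif_pos (by omega)]
  have he : (⟨(i:ℕ)+1-1, by omega⟩ : Fin m) = i := by
    apply Fin.ext
    simp
  rw [he]

lemma phi_gsum (x : V) : phi bas x (m + 1) = ∑ j' : Fin k, bas.repr x (Sum.inr j') := by
  unfold phi
  rw [dif_neg (by omega), if_pos rfl]

include hbas

lemma phi_a (i : Fin m) (j : ℕ) : phi bas (a i) j = if j = (i : ℕ) + 1 then 1 else 0 := by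
  have hi : (i : ℕ) < m := i.isLt
  have hb : a i = bas (Sum.inl i) := by rw [hbas]; rfl
  unfold phi
  by_cases h1 : 1 ≤ j ∧ j ≤ m
  · rw [dif_pos h1, hb, Module.Basis.repr_self, Finsupp.single_apply]
    by_cases h2 : j = (i:ℕ) + 1
    · rw [if_pos, if_pos h2]
      rw [Sum.inl.injEq]
      apply Fin.ext
      show (i : ℕ) = j - 1
      omega
    · rw [if_neg, if_neg h2]
      rw [Sum.inl.injEq]
      intro hcon
      apply h2
      have := congrArg Fin.val hcon
      simp only [Fin.val_mk] at this
      omega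
  · rw [dif_neg h1, if_neg (by omega : ¬ j = (i:ℕ)+1)]
    by_cases h3 : j = m+1
    · rw [if_pos h3, hb, Module.Basis.repr_self, Finset.sum_eq_zero]
      intro j' _
      rw [Finsupp.single_apply, if_neg (by simp)]
    · rw [if_neg h3]

lemma phi_c (j' : Fin k) (j : ℕ) : phi bas (c j') j = if j = m + 1 then 1 else 0 := by
  have hb : c j' = bas (Sum.inr j') := by rw [hbas]; rfl
  unfold phi
  by_cases h1 : 1 ≤ j ∧ j ≤ m
  · rw [dif_pos h1, if_neg (by omega), hb, Module.Basis.repr_self, Finsupp.single_apply,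
      if_neg (by simp)]
  · rw [dif_neg h1]
    by_cases h3 : j = m+1
    · rw [if_pos h3, if_pos h3, hb, Module.Basis.repr_self]
      simp only [Module.Basis.repr_self, Finsupp.single_apply, Sum.inr.injEq]
      rw [Finset.sum_ite_eq]
      simp
    · rw [if_neg h3, if_neg h3]

end S16
namespace S16
open scoped BigOperators

variable {V : Type*} [AddCommGroup V] [Module (ZMod 2) V]

variable {Ω : BForm V} {m k : ℕ} {a : Fin m → V} {c : Fin k → V}
  {bas : Module.Basis (Fin m ⊕ Fin k) (ZMod 2) V}

section F4

variable (hbas : ⇑bas = Sum.elim a c)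
  (hspan : Submodule.span (ZMod 2) (Set.range a ∪ Set.range c) = ⊤)
  (hm : 2 ≤ m)
  (haa : ∀ i j : Fin m,
      Ω (a i) (a j) = if (i : ℕ) + 1 = (j : ℕ) ∨ (j : ℕ) + 1 = (i : ℕ) then 1 else 0)
  (hac : ∀ (i : Fin m) (j : Fin k), Ω (a i) (c j) = if (i : ℕ) + 1 = m then 1 else 0)
  (hca : ∀ (j : Fin k) (i : Fin m), Ω (c j) (a i) = if (i : ℕ) + 1 = m then 1 else 0)
  (hcc : ∀ i j : Fin k, Ω (c i) (c j) = 0)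

include hbas hspan

include haa hca in
lemma F4a (x : V) (i : Fin m) :
    Ω x (a i) = phi bas x (i : ℕ) + phi bas x ((i : ℕ) + 2) := by
  have hx : x ∈ Submodule.span (ZMod 2) (Set.range a ∪ Set.range c) := by
    rw [hspan]; trivial
  refine Submodule.span_induction
    (p := fun v _ => Ω v (a i) = phi bas v (i : ℕ) + phi bas v ((i : ℕ) + 2)) ?_ ?_ ?_ ?_ hx
  · rintro v (⟨i', rfl⟩ | ⟨j', rfl⟩)
    · rw [haa, phi_a bas hbas, phi_a bas hbas]
      have h1 := i.isLt
      have h2 := i'.isLt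
      split_ifs <;> first | decide | (exfalso; omega)
    · rw [hca, phi_c bas hbas, phi_c bas hbas]
      have h1 := i.isLt
      split_ifs <;> first | decide | (exfalso; omega)
  · simp [phi_zero]
  · intro x y hx hy ihx ihy
    rw [map_add, LinearMap.add_apply, phi_add, phi_add, ihx, ihy]
    ring
  · intro r x hx ih
    rcases zmod2cases r with rfl | rfl
    · simp [phi_zero]
    · simpa using ih

include hac hcc in
lemma F4c (x : V) (j : Fin k) :
    Ω x (c j) = phi bas x m + phi bas x (m + 2) := by
  have hx : x ∈ Submodule.span (ZMod 2) (Set.range a ∪ Set.range c) := by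
    rw [hspan]; trivial
  refine Submodule.span_induction
    (p := fun v _ => Ω v (c j) = phi bas v m + phi bas v (m + 2)) ?_ ?_ ?_ ?_ hx
  · rintro v (⟨i', rfl⟩ | ⟨j', rfl⟩)
    · rw [hac, phi_a bas hbas, phi_a bas hbas]
      have h2 := i'.isLt
      split_ifs <;> first | decide | (exfalso; omega)
    · rw [hcc, phi_c bas hbas, phi_c bas hbas]
      split_ifs <;> first | decide | (exfalso; omega)
  · simp [phi_zero]
  · intro x y hx hy ihx ihy
    rw [map_add, LinearMap.add_apply, phi_add, phi_add, ihx, ihy]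
    ring
  · intro r x hx ih
    rcases zmod2cases r with rfl | rfl
    · simp [phi_zero]
    · simpa using ih

end F4

lemma V0set_eq_ker (Ω : BForm V) : V0set Ω = ↑(LinearMap.ker Ω) := by
  ext x
  simp only [V0set, Set.mem_setOf_eq, SetLike.mem_coe, LinearMap.mem_ker]
  constructor
  · intro h
    apply LinearMap.ext
    intro v
    simpa using h v
  · intro h v
    rw [h]
    rfl

lemma mem_V0_of_basis (hspan : Submodule.span (ZMod 2) (Set.range a ∪ Set.range c) = ⊤)
    (x : V) (ha' : ∀ i, Ω x (a i) = 0) (hc' : ∀ j, Ω x (c j) = 0) : x ∈ V0set Ω := by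
  simp only [V0set, Set.mem_setOf_eq]
  intro v
  have hv : v ∈ Submodule.span (ZMod 2) (Set.range a ∪ Set.range c) := by
    rw [hspan]; trivial
  refine Submodule.span_induction (p := fun v _ => Ω x v = 0) ?_ ?_ ?_ ?_ hv
  · rintro v (⟨i', rfl⟩ | ⟨j', rfl⟩)
    · exact ha' i'
    · exact hc' j'
  · simp
  · intro u w _ _ ihu ihw
    rw [map_add, ihu, ihw, add_zero]
  · intro r u _ ih
    rw [map_smul, ih, smul_zero]

lemma repr_split (hbas : ⇑bas = Sum.elim a c) (x : V) :
    x = (∑ i, bas.repr x (Sum.inl i) • a i) + ∑ j, bas.repr x (Sum.inr j) • c j := by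
  have h := bas.sum_repr x
  rw [Fintype.sum_sum_type] at h
  conv_lhs => rw [← h]
  simp only [hbas, Sum.elim_inl, Sum.elim_inr]

lemma sum_c_mem_span (hk : 0 < k) (γ : Fin k → ZMod 2) (hγ : ∑ j, γ j = 0) :
    (∑ j, γ j • c j) ∈ Submodule.span (ZMod 2) (cDiffs hk c) := by
  have he : ∑ j, γ j • (c ⟨0,hk⟩ + c j) = ∑ j, γ j • c j := by
    simp only [smul_add]
    rw [Finset.sum_add_distrib, ← Finset.sum_smul, hγ, zero_smul, zero_add]
  rw [← he]
  apply Submodule.sum_mem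
  intro j _
  by_cases hj : (j : ℕ) = 0
  · have hj' : j = ⟨0, hk⟩ := Fin.ext hj
    rw [hj', addself, smul_zero]
    exact Submodule.zero_mem _
  · exact Submodule.smul_mem _ _ (Submodule.subset_span ⟨j, hj, rfl⟩)

end S16
namespace S16
open scoped BigOperators

lemma zadd (r : ZMod 2) : r + r = 0 := by revert r; decide

variable {V : Type*} [AddCommGroup V] [Module (ZMod 2) V]

variable {Ω : BForm V} {m k : ℕ} {a : Fin m → V} {c : Fin k → V}
  {bas : Module.Basis (Fin m ⊕ Fin k) (ZMod 2) V}

section Ker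

variable (hbas : ⇑bas = Sum.elim a c)
  (hspan : Submodule.span (ZMod 2) (Set.range a ∪ Set.range c) = ⊤)
  (hm : 2 ≤ m)
  (haa : ∀ i j : Fin m,
      Ω (a i) (a j) = if (i : ℕ) + 1 = (j : ℕ) ∨ (j : ℕ) + 1 = (i : ℕ) then 1 else 0)
  (hac : ∀ (i : Fin m) (j : Fin k), Ω (a i) (c j) = if (i : ℕ) + 1 = m then 1 else 0)
  (hca : ∀ (j : Fin k) (i : Fin m), Ω (c j) (a i) = if (i : ℕ) + 1 = m then 1 else 0)
  (hcc : ∀ i j : Fin k, Ω (c i) (c j) = 0)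

include hbas hspan hm haa hca in
lemma phi_parity (x : V) (hx : x ∈ V0set Ω) :
    ∀ j, j ≤ m + 1 → phi bas x j = if j % 2 = 1 then phi bas x 1 else 0 := by
  intro j
  induction j using Nat.strong_induction_on with
  | _ j ih =>
    match j with
    | 0 =>
      intro _
      rw [if_neg (by omega)]
      unfold phi
      rw [dif_neg (by omega), if_neg (by omega)]
    | 1 =>
      intro _
      rw [if_pos (by omega)]
    | (j'+2) =>
      intro hj
      have hij : (j' : ℕ) < m := by omega
      have hstep : phi bas x (j' + 2) = phi bas x j' := by
        have h0 : Ω x (a ⟨j', hij⟩) = 0 := hx (a ⟨j', hij⟩)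
        rw [F4a hbas hspan haa hca x ⟨j', hij⟩] at h0
        exact (eqz h0).symm
      rw [hstep, ih j' (by omega) (by omega)]
      have : (j' + 2) % 2 = j' % 2 := by omega
      rw [this]

include hbas in
lemma phi_w' (hme : m % 2 = 0) (hk : 0 < k) (j : ℕ) :
    phi bas (oddSum a + c ⟨0, hk⟩) j = if j % 2 = 1 ∧ j ≤ m + 1 then 1 else 0 := by
  rw [phi_add, phi_c bas hbas]
  unfold oddSum
  rw [phi_sum]
  by_cases hj : 1 ≤ j ∧ j ≤ m ∧ (j - 1) % 2 = 0
  · have hlt : j - 1 < m := by omega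
    have hsum : ∑ i ∈ Finset.univ.filter (fun i : Fin m => (i : ℕ) % 2 = 0),
        phi bas (a i) j = 1 := by
      rw [Finset.sum_eq_single (⟨j - 1, hlt⟩ : Fin m)]
      · rw [phi_a bas hbas, if_pos (by simp; omega)]
      · intro i hi hne
        rw [phi_a bas hbas, if_neg]
        intro hcon
        apply hne
        apply Fin.ext
        simp
        omega
      · intro habs
        exfalso
        apply habs
        simp only [Finset.mem_filter, Finset.mem_univ, true_and, Fin.val_mk]
        omega
    rw [hsum, if_neg (by omega : ¬ j = m + 1), if_pos (by omega)]
    decide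
  · have hsum : ∑ i ∈ Finset.univ.filter (fun i : Fin m => (i : ℕ) % 2 = 0),
        phi bas (a i) j = 0 := by
      apply Finset.sum_eq_zero
      intro i hi
      simp only [Finset.mem_filter, Finset.mem_univ, true_and] at hi
      have := i.isLt
      rw [phi_a bas hbas, if_neg (by omega)]
    rw [hsum]
    by_cases h3 : j = m + 1
    · rw [if_pos h3, if_pos (by omega)]
      decide
    · rw [if_neg h3, if_neg (by omega)]
      decide

include hbas hspan hm haa hca in
lemma ker_decomp_even (hme : m % 2 = 0) (hk : 0 < k) (x : V) (hx : x ∈ V0set Ω) :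
    ∃ r : ZMod 2, ∃ t ∈ Submodule.span (ZMod 2) (cDiffs hk c),
      x = r • (oddSum a + c ⟨0, hk⟩) + t := by
  set r := phi bas x 1 with hr
  have hpar := phi_parity hbas hspan hm haa hca x hx
  have hal : ∀ i : Fin m, bas.repr x (Sum.inl i) = if (i : ℕ) % 2 = 0 then r else 0 := by
    intro i
    rw [← phi_coord bas x i, hpar ((i : ℕ) + 1) (by have := i.isLt; omega)]
    by_cases h : (i : ℕ) % 2 = 0
    · rw [if_pos (by omega), if_pos h]
    · rw [if_neg (by omega), if_neg h]
  have hgs : ∑ j', bas.repr x (Sum.inr j') = r := by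
    rw [← phi_gsum bas x, hpar (m + 1) le_rfl, if_pos (by omega)]
  have hsplit := repr_split hbas x
  have hAsum : (∑ i, bas.repr x (Sum.inl i) • a i) = r • oddSum a := by
    unfold oddSum
    rw [Finset.smul_sum, Finset.sum_filter]
    apply Finset.sum_congr rfl
    intro i _
    rw [hal i]
    split_ifs with h
    · rfl
    · rw [zero_smul]
  set γ : Fin k → ZMod 2 := fun j => bas.repr x (Sum.inr j) with hγ
  set γ' : Fin k → ZMod 2 := fun j => (if j = ⟨0, hk⟩ then r else 0) + γ j with hγ'
  have hγ's : ∑ j, γ' j = 0 := by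
    rw [hγ']
    rw [Finset.sum_add_distrib, Finset.sum_ite_eq' Finset.univ (⟨0, hk⟩ : Fin k) fun _ => r]
    simp only [Finset.mem_univ, if_true]
    rw [show ∑ j, γ j = r from hgs]
    exact zadd r
  refine ⟨r, ∑ j, γ' j • c j, sum_c_mem_span hk γ' hγ's, ?_⟩
  have hc0 : ∑ j, (if j = (⟨0, hk⟩ : Fin k) then r else 0) • c j = r • c ⟨0, hk⟩ := by
    simp only [ite_smul, zero_smul]
    rw [Finset.sum_ite_eq' Finset.univ (⟨0, hk⟩ : Fin k) fun j => r • c j]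
    simp
  have hsum' : ∑ j, γ' j • c j = r • c ⟨0, hk⟩ + ∑ j, γ j • c j := by
    rw [hγ']
    simp only [add_smul]
    rw [Finset.sum_add_distrib, hc0]
  rw [hsum', smul_add]
  conv_lhs => rw [hsplit, hAsum]
  rw [show r • oddSum a + r • c ⟨0, hk⟩ + (r • c ⟨0, hk⟩ + ∑ j, γ j • c j)
      = r • oddSum a + ((r • c ⟨0, hk⟩ + r • c ⟨0, hk⟩) + ∑ j, γ j • c j) from by abel]
  rw [addself, zero_add]

include hbas hspan hm haa hac hca hcc in
lemma ker_decomp_odd (hmo : m % 2 = 1) (hk : 0 < k) (x : V) (hx : x ∈ V0set Ω) :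
    x ∈ Submodule.span (ZMod 2) (cDiffs hk c) := by
  set r := phi bas x 1 with hr
  have hpar := phi_parity hbas hspan hm haa hca x hx
  have hr0 : r = 0 := by
    have h0 : Ω x (c ⟨0, hk⟩) = 0 := hx _
    rw [F4c hbas hspan hac hcc x ⟨0, hk⟩, phi_big bas x (m + 2) le_rfl, add_zero] at h0
    rw [hpar m (by omega), if_pos hmo] at h0
    exact h0
  have hal : ∀ i : Fin m, bas.repr x (Sum.inl i) = 0 := by
    intro i
    rw [← phi_coord bas x i, hpar ((i : ℕ) + 1) (by have := i.isLt; omega)]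
    rw [← hr]
    split_ifs with h
    · exact hr0
    · rfl
  have hgs : ∑ j', bas.repr x (Sum.inr j') = 0 := by
    rw [← phi_gsum bas x, hpar (m + 1) le_rfl, if_neg (by omega)]
  have hsplit := repr_split hbas x
  rw [Finset.sum_eq_zero (fun i _ => by rw [hal i, zero_smul]), zero_add] at hsplit
  rw [hsplit]
  exact sum_c_mem_span hk _ hgs

include haa hac hca hcc in
lemma cdiff_mem_V0 (hspan2 : Submodule.span (ZMod 2) (Set.range a ∪ Set.range c) = ⊤)
    (hk : 0 < k) (j : Fin k) : (c ⟨0, hk⟩ + c j) ∈ V0set Ω := by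
  apply mem_V0_of_basis hspan2
  · intro i
    rw [map_add, LinearMap.add_apply, hca, hca, zadd]
  · intro j'
    rw [map_add, LinearMap.add_apply, hcc, hcc, add_zero]

include hbas hspan hm haa hac hca hcc in
lemma w'_mem_V0 (hme : m % 2 = 0) (hk : 0 < k) : (oddSum a + c ⟨0, hk⟩) ∈ V0set Ω := by
  apply mem_V0_of_basis hspan
  · intro i
    rw [F4a hbas hspan haa hca, phi_w' hbas hme hk, phi_w' hbas hme hk]
    have := i.isLt
    by_cases h : (i : ℕ) % 2 = 1
    · rw [if_pos (by omega), if_pos (by omega)]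
      decide
    · rw [if_neg (by omega), if_neg (by omega)]
      decide
  · intro j
    rw [F4c hbas hspan hac hcc, phi_w' hbas hme hk, phi_w' hbas hme hk]
    rw [if_neg (by omega), if_neg (by omega), add_zero]

include haa hac hca hcc in
lemma span_cdiffs_sub_V0 (hspan2 : Submodule.span (ZMod 2) (Set.range a ∪ Set.range c) = ⊤)
    (hk : 0 < k) : (↑(Submodule.span (ZMod 2) (cDiffs hk c)) : Set V) ⊆ V0set Ω := by
  intro t ht
  rw [V0set_eq_ker]
  have hle : Submodule.span (ZMod 2) (cDiffs hk c) ≤ LinearMap.ker Ω := by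
    apply Submodule.span_le.mpr
    rintro y ⟨j, hj, rfl⟩
    have := cdiff_mem_V0 haa hac hca hcc hspan2 hk j
    rw [V0set_eq_ker] at this
    exact this
  exact hle ht

end Ker

end S16
namespace S16
open scoped BigOperators

variable {V : Type*} [AddCommGroup V] [Module (ZMod 2) V]

variable {Ω : BForm V} {m k : ℕ} {a : Fin m → V} {c : Fin k → V}
  {bas : Module.Basis (Fin m ⊕ Fin k) (ZMod 2) V}

lemma cancel2 (u v w : V) : (u + v) + (v + w) = u + w := by
  rw [show (u + v) + (v + w) = u + (v + v) + w from by abel, addself, add_zero]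

section QF

variable (hbas : ⇑bas = Sum.elim a c)
  (hspan : Submodule.span (ZMod 2) (Set.range a ∪ Set.range c) = ⊤)
  (hm : 2 ≤ m)
  (haa : ∀ i j : Fin m,
      Ω (a i) (a j) = if (i : ℕ) + 1 = (j : ℕ) ∨ (j : ℕ) + 1 = (i : ℕ) then 1 else 0)
  (hac : ∀ (i : Fin m) (j : Fin k), Ω (a i) (c j) = if (i : ℕ) + 1 = m then 1 else 0)
  (hca : ∀ (j : Fin k) (i : Fin m), Ω (c j) (a i) = if (i : ℕ) + 1 = m then 1 else 0)
  (hcc : ∀ i j : Fin k, Ω (c i) (c j) = 0)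
  {Q : V → ZMod 2} (hQ : IsQuadForm Ω (Set.range a ∪ Set.range c) Q)

include hQ in
lemma Q_zero : Q 0 = 0 := by
  have h := hQ.2 0 0
  rw [add_zero, map_zero, add_zero] at h
  rcases zmod2cases (Q 0) with h0 | h0
  · exact h0
  · rw [h0] at h
    exact absurd h (by decide)

include haa hac hca hcc hQ in
lemma Q_span_cdiffs (hspan2 : Submodule.span (ZMod 2) (Set.range a ∪ Set.range c) = ⊤)
    (hk : 0 < k) {t : V} (ht : t ∈ Submodule.span (ZMod 2) (cDiffs hk c)) : Q t = 0 := by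
  refine Submodule.span_induction (p := fun t _ => Q t = 0) ?_ ?_ ?_ ?_ ht
  · rintro y ⟨j, hj, rfl⟩
    rw [hQ.2, hcc, hQ.1 _ (Or.inr ⟨_, rfl⟩), hQ.1 _ (Or.inr ⟨_, rfl⟩)]
    decide
  · exact Q_zero hQ
  · intro u v hu _ ihu ihv
    have h0 : Ω u v = 0 :=
      span_cdiffs_sub_V0 haa hac hca hcc hspan2 hk hu v
    rw [hQ.2, ihu, ihv, h0, add_zero, add_zero]
  · intro r u _ ih
    rcases zmod2cases r with rfl | rfl
    · rw [zero_smul]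
      exact Q_zero hQ
    · rwa [one_smul]

include haa hQ in
lemma Q_sum_a (s : Finset (Fin m))
    (hp : ∀ i ∈ s, ∀ j ∈ s, i ≠ j → Ω (a i) (a j) = 0) :
    Q (∑ i ∈ s, a i) = (s.card : ZMod 2) := by
  classical
  induction s using Finset.induction_on with
  | empty => simpa using Q_zero hQ
  | insert _ _ hi ih =>
    rename_i i s
    rw [Finset.sum_insert hi, hQ.2, hQ.1 _ (Or.inl ⟨i, rfl⟩)]
    rw [ih (fun i' hi' j' hj' hne => hp i' (Finset.mem_insert_of_mem hi') j'
      (Finset.mem_insert_of_mem hj') hne)]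
    have hz : Ω (a i) (∑ j ∈ s, a j) = 0 := by
      rw [map_sum, Finset.sum_eq_zero]
      intro j hj
      exact hp i (Finset.mem_insert_self i s) j (Finset.mem_insert_of_mem hj)
        (fun h => hi (h ▸ hj))
    rw [hz, add_zero, Finset.card_insert_of_notMem hi]
    push_cast
    ring

lemma range_even_sum : ∀ n : ℕ, (∑ i ∈ Finset.range n, if i % 2 = 0 then 1 else 0) = (n+1)/2 := by
  intro n
  induction n with
  | zero => simp
  | succ n ih =>
    rw [Finset.sum_range_succ, ih]
    by_cases h : n % 2 = 0
    · rw [if_pos h]; omega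
    · rw [if_neg h]; omega

lemma even_filter_card : (Finset.univ.filter (fun i : Fin m => (i : ℕ) % 2 = 0)).card
    = (m+1)/2 := by
  rw [Finset.card_filter]
  rw [Fin.sum_univ_eq_sum_range (fun i => if i % 2 = 0 then 1 else 0)]
  exact range_even_sum m

include hbas hspan hm haa hac hca hcc hQ in
lemma Q_w' (hme : m % 2 = 0) (hk : 0 < k) :
    Q (oddSum a + c ⟨0, hk⟩) = (((m+1)/2 : ℕ) : ZMod 2) + 1 := by
  have hodd : oddSum a = (oddSum a + c ⟨0, hk⟩) + c ⟨0, hk⟩ := by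
    rw [add_assoc, addself, add_zero]
  have homega : Ω (oddSum a) (c ⟨0, hk⟩) = 0 := by
    rw [hodd, map_add, LinearMap.add_apply,
      w'_mem_V0 hbas hspan hm haa hac hca hcc hme hk (c ⟨0, hk⟩), hcc, add_zero]
  rw [hQ.2, homega, add_zero, hQ.1 _ (Or.inr ⟨_, rfl⟩)]
  unfold oddSum
  rw [Q_sum_a haa hQ _ ?_, even_filter_card]
  intro i hi j hj hne
  simp only [Finset.mem_filter, Finset.mem_univ, true_and] at hi hj
  rw [haa, if_neg]
  rintro (h | h) <;>
  · have : (i : ℕ) ≠ (j : ℕ) := fun hc => hne (Fin.ext hc)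
    omega

include hbas hspan hm haa hac hca hcc hQ in
lemma Q_w'_two (h42 : m % 4 = 2) (hk : 0 < k) : Q (oddSum a + c ⟨0, hk⟩) = 0 := by
  rw [Q_w' hbas hspan hm haa hac hca hcc hQ (by omega) hk]
  have h1 : ((m+1)/2) % 2 = 1 := by omega
  rw [← ZMod.natCast_mod ((m+1)/2) 2, h1]
  decide

include hbas hspan hm haa hac hca hcc hQ in
lemma Q_w'_zero (h40 : m % 4 = 0) (hk : 0 < k) : Q (oddSum a + c ⟨0, hk⟩) = 1 := by
  rw [Q_w' hbas hspan hm haa hac hca hcc hQ (by omega) hk]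
  have h1 : ((m+1)/2) % 2 = 0 := by omega
  rw [← ZMod.natCast_mod ((m+1)/2) 2, h1]
  decide

end QF

end S16
namespace S16
open scoped BigOperators

variable {V : Type*} [AddCommGroup V] [Module (ZMod 2) V]

variable {Ω : BForm V} {m k : ℕ} {a : Fin m → V} {c : Fin k → V}
  {bas : Module.Basis (Fin m ⊕ Fin k) (ZMod 2) V}

lemma mem_Delta_of_mem {B : Set V} {b : V} (hb : b ∈ B) : b ∈ Delta Ω B :=
  ⟨b, hb, 1, Subgroup.one_mem _, rfl⟩

lemma tau_mem_Gamma (hΩ : ∀ x : V, Ω x x = 0) {B : Set V} {v : V} (hv : v ∈ B) :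
    tau Ω hΩ v ∈ Gamma Ω B :=
  Subgroup.subset_closure ⟨v, hv, fun _ => rfl⟩

lemma Delta_tau (hΩ : ∀ x : V, Ω x x = 0) {B : Set V} {x v : V} (hv : v ∈ B)
    (hx : x ∈ Delta Ω B) : (x + Ω x v • v) ∈ Delta Ω B := by
  obtain ⟨b, hb, g, hg, hgb⟩ := hx
  exact ⟨b, hb, tau Ω hΩ v * g,
    Subgroup.mul_mem _ (tau_mem_Gamma hΩ hv) hg, by
      show tau Ω hΩ v (g b) = _
      rw [hgb, tau_apply]⟩

section DeltaLemmas

variable (hΩ : ∀ x : V, Ω x x = 0)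
  (hbas : ⇑bas = Sum.elim a c)
  (hspan : Submodule.span (ZMod 2) (Set.range a ∪ Set.range c) = ⊤)
  (hm : 2 ≤ m)
  (haa : ∀ i j : Fin m,
      Ω (a i) (a j) = if (i : ℕ) + 1 = (j : ℕ) ∨ (j : ℕ) + 1 = (i : ℕ) then 1 else 0)
  (hac : ∀ (i : Fin m) (j : Fin k), Ω (a i) (c j) = if (i : ℕ) + 1 = m then 1 else 0)
  (hca : ∀ (j : Fin k) (i : Fin m), Ω (c j) (a i) = if (i : ℕ) + 1 = m then 1 else 0)
  (hcc : ∀ i j : Fin k, Ω (c i) (c j) = 0)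

include hΩ hm hac hcc in
lemma Delta_last (s : Finset (Fin k)) :
    (a ⟨m-1, by omega⟩ + ∑ j ∈ s, c j) ∈ Delta Ω (Set.range a ∪ Set.range c) := by
  classical
  induction s using Finset.induction_on with
  | empty =>
    rw [Finset.sum_empty, add_zero]
    exact mem_Delta_of_mem (Or.inl ⟨_, rfl⟩)
  | insert _ _ hj ih =>
    rename_i j s
    have hΩv : Ω (a ⟨m-1, by omega⟩ + ∑ j' ∈ s, c j') (c j) = 1 := by
      rw [map_add, LinearMap.add_apply, hac, if_pos (by simp; omega)]
      rw [map_sum, LinearMap.sum_apply, Finset.sum_eq_zero (fun j' _ => hcc j' j), add_zero]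
    have h := Delta_tau hΩ (Or.inr ⟨j, rfl⟩) ih
    rw [hΩv, one_smul] at h
    have he : a ⟨m-1, by omega⟩ + ∑ j' ∈ insert j s, c j'
        = (a ⟨m-1, by omega⟩ + ∑ j' ∈ s, c j') + c j := by
      rw [Finset.sum_insert hj]
      abel
    rw [he]
    exact h

include hΩ hm haa in
lemma Delta_a01 : (a ⟨0, by omega⟩ + a ⟨1, by omega⟩) ∈ Delta Ω (Set.range a ∪ Set.range c) := by
  have h := Delta_tau (B := Set.range a ∪ Set.range c) hΩ
    (show a ⟨1, by omega⟩ ∈ Set.range a ∪ Set.range c from Or.inl ⟨⟨1, by omega⟩, rfl⟩)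
    (mem_Delta_of_mem (Ω := Ω)
      (show a ⟨0, by omega⟩ ∈ Set.range a ∪ Set.range c from Or.inl ⟨⟨0, by omega⟩, rfl⟩))
  have hval : Ω (a ⟨0, by omega⟩) (a ⟨1, by omega⟩) = 1 := by
    rw [haa]
    exact if_pos (Or.inl (by simp))
  rw [hval, one_smul] at h
  exact h

include hbas hspan hm haa hac hca hcc in
set_option maxHeartbeats 1000000 in
lemma Dcount_Gamma : ∀ g ∈ Gamma Ω (Set.range a ∪ Set.range c), ∀ x : V,
    Dcount m (phi bas (g x)) = Dcount m (phi bas x) := by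
  intro g hg
  refine Subgroup.closure_induction
    (p := fun g _ => ∀ x : V, Dcount m (phi bas (g x)) = Dcount m (phi bas x))
    ?_ ?_ ?_ ?_ hg
  · rintro g' ⟨b, hb, hgb⟩ x
    rcases hb with ⟨i, rfl⟩ | ⟨j, rfl⟩
    · have he : ∀ jj : ℕ, phi bas (g' x) jj = phi bas x jj
          + (phi bas x ((i : ℕ) + 1 - 1) + phi bas x ((i : ℕ) + 1 + 1)) *
            (if jj = (i : ℕ) + 1 then 1 else 0) := by
        intro jj
        rw [hgb x, phi_add, phi_smul, phi_a bas hbas,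
          F4a hbas hspan haa hca x i, Nat.add_sub_cancel]
      rw [Dcount_congr he]
      exact Dcount_flip m ((i : ℕ) + 1) (by omega) (by have := i.isLt; omega) (phi bas x)
    · have he : ∀ jj : ℕ, phi bas (g' x) jj = phi bas x jj
          + (phi bas x (m + 1 - 1) + phi bas x (m + 1 + 1)) *
            (if jj = m + 1 then 1 else 0) := by
        intro jj
        rw [hgb x, phi_add, phi_smul, phi_c bas hbas,
          F4c hbas hspan hac hcc x j, Nat.add_sub_cancel]
      rw [Dcount_congr he]
      exact Dcount_flip m (m + 1) (by omega) (by omega) (phi bas x)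
  · intro x
    rfl
  · intro g1 g2 h1 h2 ih1 ih2 x
    have : (g1 * g2) x = g1 (g2 x) := rfl
    rw [this, ih1, ih2]
  · intro g1 h1 ih x
    have h2 := (ih (g1⁻¹ x)).symm
    have : g1 (g1⁻¹ x) = x := by
      show g1 (g1.symm x) = x
      exact g1.apply_symm_apply x
    rwa [this] at h2

include hbas hspan hm haa hac hca hcc in
lemma Dcount_Delta {x : V} (hx : x ∈ Delta Ω (Set.range a ∪ Set.range c)) :
    Dcount m (phi bas x) = 2 := by
  obtain ⟨b, hb, g, hg, rfl⟩ := hx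
  rw [Dcount_Gamma hbas hspan hm haa hac hca hcc g hg b]
  rcases hb with ⟨i, rfl⟩ | ⟨j, rfl⟩
  · rw [Dcount_congr (fun j => phi_a bas hbas i j)]
    exact Dcount_single m ((i : ℕ) + 1) (by omega) (by have := i.isLt; omega)
  · rw [Dcount_congr (fun jj => phi_c bas hbas j jj)]
    exact Dcount_single m (m + 1) (by omega) (by omega)

include hbas in
lemma Dcount_w' (hme : m % 2 = 0) (hk : 0 < k) :
    Dcount m (phi bas (oddSum a + c ⟨0, hk⟩)) = m + 2 := by
  rw [Dcount_congr (fun j => phi_w' hbas hme hk j)]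
  unfold Dcount
  rw [Finset.filter_true_of_mem, Finset.card_range]
  intro j hj
  rw [Finset.mem_range] at hj
  dsimp only
  split_ifs with h1 h2 <;> first | decide | (exfalso; omega)

include hbas in
lemma span_cdiffs_repr_inl (hk : 0 < k) {t : V}
    (ht : t ∈ Submodule.span (ZMod 2) (cDiffs hk c)) (i : Fin m) :
    bas.repr t (Sum.inl i) = 0 := by
  refine Submodule.span_induction (p := fun t _ => bas.repr t (Sum.inl i) = 0) ?_ ?_ ?_ ?_ ht
  · rintro y ⟨j, hj, rfl⟩
    have h0 : c (⟨0, hk⟩ : Fin k) = bas (Sum.inr ⟨0, hk⟩) := by rw [hbas]; rfl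
    have h1 : c j = bas (Sum.inr j) := by rw [hbas]; rfl
    rw [map_add, Finsupp.add_apply, h0, h1, Module.Basis.repr_self, Module.Basis.repr_self,
      Finsupp.single_apply, Finsupp.single_apply, if_neg (by simp), if_neg (by simp)]
    rfl
  · simp
  · intro u v _ _ ihu ihv
    rw [map_add, Finsupp.add_apply, ihu, ihv, add_zero]
  · intro r u _ ih
    rw [map_smul, Finsupp.smul_apply, ih, smul_zero]

include hbas in
lemma sum_c_of_repr (hk : 0 < k) {t : V} (h : ∀ i : Fin m, bas.repr t (Sum.inl i) = 0) :
    ∃ s : Finset (Fin k), t = ∑ j ∈ s, c j := by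
  classical
  have hsplit := repr_split hbas t
  rw [Finset.sum_eq_zero (fun i _ => by rw [h i, zero_smul]), zero_add] at hsplit
  refine ⟨Finset.univ.filter (fun j => bas.repr t (Sum.inr j) = 1), ?_⟩
  conv_lhs => rw [hsplit]
  rw [Finset.sum_filter]
  apply Finset.sum_congr rfl
  intro j _
  by_cases hc : bas.repr t (Sum.inr j) = 1
  · rw [if_pos hc, hc, one_smul]
  · rw [if_neg hc]
    have h0 : bas.repr t (Sum.inr j) = 0 := by
      rcases zmod2cases (bas.repr t (Sum.inr j)) with h' | h'
      · exact h'
      · exact absurd h' hc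
    rw [h0, zero_smul]

end DeltaLemmas

end S16
namespace S16
open scoped BigOperators

variable {V : Type*} [AddCommGroup V] [Module (ZMod 2) V]

variable {Ω : BForm V} {m k : ℕ} {a : Fin m → V} {c : Fin k → V}
  {bas : Module.Basis (Fin m ⊕ Fin k) (ZMod 2) V}

section Final

variable (hΩ : ∀ x : V, Ω x x = 0)
  (hbas : ⇑bas = Sum.elim a c)
  (hspan : Submodule.span (ZMod 2) (Set.range a ∪ Set.range c) = ⊤)
  (hm : 2 ≤ m)
  (haa : ∀ i j : Fin m,
      Ω (a i) (a j) = if (i : ℕ) + 1 = (j : ℕ) ∨ (j : ℕ) + 1 = (i : ℕ) then 1 else 0)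
  (hac : ∀ (i : Fin m) (j : Fin k), Ω (a i) (c j) = if (i : ℕ) + 1 = m then 1 else 0)
  (hca : ∀ (j : Fin k) (i : Fin m), Ω (c j) (a i) = if (i : ℕ) + 1 = m then 1 else 0)
  (hcc : ∀ i j : Fin k, Ω (c i) (c j) = 0)
  {Q : V → ZMod 2} (hQ : IsQuadForm Ω (Set.range a ∪ Set.range c) Q)

include hbas in
lemma span_cdiffs_repr_sum (hk : 0 < k) {t : V}
    (ht : t ∈ Submodule.span (ZMod 2) (cDiffs hk c)) :
    ∑ j', bas.repr t (Sum.inr j') = 0 := by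
  refine Submodule.span_induction (p := fun t _ => ∑ j', bas.repr t (Sum.inr j') = 0)
    ?_ ?_ ?_ ?_ ht
  · rintro y ⟨j, hj, rfl⟩
    have h0 : c (⟨0, hk⟩ : Fin k) = bas (Sum.inr ⟨0, hk⟩) := by rw [hbas]; rfl
    have h1 : c j = bas (Sum.inr j) := by rw [hbas]; rfl
    have hone : ∀ j0 : Fin k, ∑ j', bas.repr (bas (Sum.inr j0)) (Sum.inr j') = 1 := by
      intro j0
      simp only [Module.Basis.repr_self, Finsupp.single_apply, Sum.inr.injEq]
      rw [Finset.sum_ite_eq]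
      simp
    rw [map_add]
    simp only [Finsupp.add_apply]
    rw [Finset.sum_add_distrib, h0, h1, hone, hone, zadd]
  · simp
  · intro u v _ _ ihu ihv
    simp only [map_add, Finsupp.add_apply]
    rw [Finset.sum_add_distrib, ihu, ihv, add_zero]
  · intro r u _ ih
    simp only [map_smul, Finsupp.smul_apply]
    rw [← Finset.smul_sum, ih, smul_zero]

include hbas in
lemma phi_span_cdiffs (hk : 0 < k) {t : V}
    (ht : t ∈ Submodule.span (ZMod 2) (cDiffs hk c)) (j : ℕ) : phi bas t j = 0 := by
  unfold phi
  split_ifs with h1 h2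
  · exact span_cdiffs_repr_inl hbas hk ht _
  · exact span_cdiffs_repr_sum hbas hk ht
  · rfl

include hΩ hbas hm hac hcc in
lemma pair_of_span (hk : 0 < k) {z : V} (hz : z ∈ Submodule.span (ZMod 2) (cDiffs hk c)) :
    ∃ x₁ ∈ Delta Ω (Set.range a ∪ Set.range c),
      ∃ x₂ ∈ Delta Ω (Set.range a ∪ Set.range c), z = x₁ + x₂ := by
  obtain ⟨s, rfl⟩ := sum_c_of_repr hbas hk (fun i => span_cdiffs_repr_inl hbas hk hz i)
  refine ⟨a ⟨m-1, by omega⟩, mem_Delta_of_mem (Or.inl ⟨_, rfl⟩),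
    a ⟨m-1, by omega⟩ + ∑ j ∈ s, c j, Delta_last hΩ hm hac hcc s, ?_⟩
  rw [← add_assoc, addself, zero_add]

include haa hac hca hcc hspan in
lemma span_sub_V000 (hΩ' : ∀ x : V, Ω x x = 0) (hbas' : ⇑bas = Sum.elim a c) (hm' : 2 ≤ m)
    (hk : 0 < k) :
    (↑(Submodule.span (ZMod 2) (cDiffs hk c)) : Set V)
      ⊆ V000set Ω (Set.range a ∪ Set.range c) := by
  intro t ht
  exact ⟨span_cdiffs_sub_V0 haa hac hca hcc hspan hk ht,
    pair_of_span hΩ' hbas' hm' hac hcc hk ht⟩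

include hbas hspan hm haa hac hca hcc in
lemma V0_eq_odd (hmo : m % 2 = 1) (hk : 0 < k) :
    V0set Ω = ↑(Submodule.span (ZMod 2) (cDiffs hk c)) := by
  apply Set.Subset.antisymm
  · intro x hx
    exact ker_decomp_odd hbas hspan hm haa hac hca hcc hmo hk x hx
  · exact span_cdiffs_sub_V0 haa hac hca hcc hspan hk

include hbas hspan hm haa hac hca hcc in
lemma V0_eq_even (hme : m % 2 = 0) (hk : 0 < k) :
    V0set Ω = ↑(Submodule.span (ZMod 2) (insert (oddSum a + c ⟨0, hk⟩) (cDiffs hk c))) := by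
  apply Set.Subset.antisymm
  · intro x hx
    obtain ⟨r, t, ht, rfl⟩ := ker_decomp_even hbas hspan hm haa hca hme hk x hx
    exact Submodule.add_mem _
      (Submodule.smul_mem _ _ (Submodule.subset_span (Set.mem_insert _ _)))
      (Submodule.span_mono (Set.subset_insert _ _) ht)
  · intro x hx
    rw [V0set_eq_ker]
    have hle : Submodule.span (ZMod 2) (insert (oddSum a + c ⟨0, hk⟩) (cDiffs hk c))
        ≤ LinearMap.ker Ω := by
      rw [Submodule.span_le]
      intro y hy
      rcases Set.mem_insert_iff.mp hy with rfl | hy'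
      · have hw := w'_mem_V0 hbas hspan hm haa hac hca hcc hme hk
        rw [V0set_eq_ker] at hw
        exact hw
      · have hw := span_cdiffs_sub_V0 haa hac hca hcc hspan hk (Submodule.subset_span hy')
        rw [V0set_eq_ker] at hw
        exact hw
    exact hle hx

include hbas hspan hm haa hac hca hcc hQ in
lemma V00_odd (hmo : m % 2 = 1) (hk : 0 < k) :
    {y ∈ V0set Ω | Q y = 0} = ↑(Submodule.span (ZMod 2) (cDiffs hk c)) := by
  ext y
  rw [Set.mem_sep_iff]
  constructor
  · rintro ⟨hy0, _⟩
    rw [V0_eq_odd hbas hspan hm haa hac hca hcc hmo hk] at hy0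
    exact hy0
  · intro hy
    refine ⟨?_, Q_span_cdiffs haa hac hca hcc hQ hspan hk hy⟩
    rw [V0_eq_odd hbas hspan hm haa hac hca hcc hmo hk]
    exact hy

include hbas hspan hm haa hac hca hcc hQ in
lemma V00_even_Qw0 (hme : m % 2 = 0) (hk : 0 < k)
    (hQw : Q (oddSum a + c ⟨0, hk⟩) = 0) :
    {y ∈ V0set Ω | Q y = 0}
      = ↑(Submodule.span (ZMod 2) (insert (oddSum a + c ⟨0, hk⟩) (cDiffs hk c))) := by
  ext y
  rw [Set.mem_sep_iff]
  constructor
  · rintro ⟨hy0, _⟩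
    rw [V0_eq_even hbas hspan hm haa hac hca hcc hme hk] at hy0
    exact hy0
  · intro hy
    refine ⟨by rw [V0_eq_even hbas hspan hm haa hac hca hcc hme hk]; exact hy, ?_⟩
    obtain ⟨r, z, hz, rfl⟩ := Submodule.mem_span_insert.mp (SetLike.mem_coe.mp hy)
    have homega : Ω (r • (oddSum a + c ⟨0, hk⟩)) z = 0 := by
      rw [map_smul, LinearMap.smul_apply,
        w'_mem_V0 hbas hspan hm haa hac hca hcc hme hk z, smul_zero]
    rw [hQ.2, homega, add_zero, Q_span_cdiffs haa hac hca hcc hQ hspan hk hz, add_zero]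
    rcases zmod2cases r with rfl | rfl
    · rw [zero_smul]
      exact Q_zero hQ
    · rwa [one_smul]

include hbas hspan hm haa hac hca hcc hQ in
lemma V00_even_Qw1 (hme : m % 2 = 0) (hk : 0 < k)
    (hQw : Q (oddSum a + c ⟨0, hk⟩) = 1) :
    {y ∈ V0set Ω | Q y = 0} = ↑(Submodule.span (ZMod 2) (cDiffs hk c)) := by
  ext y
  rw [Set.mem_sep_iff]
  constructor
  · rintro ⟨hy0, hyQ⟩
    obtain ⟨r, t, ht, hdec⟩ := ker_decomp_even hbas hspan hm haa hca hme hk y hy0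
    rcases zmod2cases r with rfl | rfl
    · rw [zero_smul, zero_add] at hdec
      rw [hdec]
      exact ht
    · exfalso
      rw [one_smul] at hdec
      rw [hdec, hQ.2, hQw, Q_span_cdiffs haa hac hca hcc hQ hspan hk ht, add_zero,
        w'_mem_V0 hbas hspan hm haa hac hca hcc hme hk t, add_zero] at hyQ
      exact absurd hyQ (by decide)
  · intro hy
    exact ⟨span_cdiffs_sub_V0 haa hac hca hcc hspan hk hy,
      Q_span_cdiffs haa hac hca hcc hQ hspan hk hy⟩

include hΩ hbas hspan hm haa hac hca hcc in
lemma V000_odd (hmo : m % 2 = 1) (hk : 0 < k) :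
    V000set Ω (Set.range a ∪ Set.range c) = ↑(Submodule.span (ZMod 2) (cDiffs hk c)) := by
  apply Set.Subset.antisymm
  · rintro y ⟨hy0, _⟩
    exact ker_decomp_odd hbas hspan hm haa hac hca hcc hmo hk y hy0
  · exact span_sub_V000 hspan haa hac hca hcc hΩ hbas hm hk

include hΩ hbas hspan hm haa hac hca hcc in
lemma V000_even (hme : m % 2 = 0) (h2 : 2 < m) (hk : 0 < k) :
    V000set Ω (Set.range a ∪ Set.range c) = ↑(Submodule.span (ZMod 2) (cDiffs hk c)) := by
  apply Set.Subset.antisymm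
  · rintro y ⟨hy0, x₁, hx₁, x₂, hx₂, hy12⟩
    obtain ⟨r, t, ht, hdec⟩ := ker_decomp_even hbas hspan hm haa hca hme hk y hy0
    rcases zmod2cases r with rfl | rfl
    · rw [zero_smul, zero_add] at hdec
      rw [hdec]
      exact ht
    · exfalso
      rw [one_smul] at hdec
      have hphi : ∀ j, phi bas y j = phi bas (oddSum a + c ⟨0, hk⟩) j := by
        intro j
        rw [hdec, phi_add, phi_span_cdiffs hbas hk ht, add_zero]
      have hD : Dcount m (phi bas y) = m + 2 := by
        rw [Dcount_congr hphi, Dcount_w' hbas hme hk]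
      have hD4 : Dcount m (phi bas y) ≤ 4 := by
        have h12 : ∀ j, phi bas y j = phi bas x₁ j + phi bas x₂ j := by
          intro j
          rw [hy12, phi_add]
        rw [Dcount_congr h12]
        have hle := Dcount_add_le m (phi bas x₁) (phi bas x₂)
        rw [Dcount_Delta hbas hspan hm haa hac hca hcc hx₁,
          Dcount_Delta hbas hspan hm haa hac hca hcc hx₂] at hle
        exact hle
      omega
  · exact span_sub_V000 hspan haa hac hca hcc hΩ hbas hm hk

include hΩ hbas hspan hm haa hac hca hcc in
lemma V000_two (hm2 : m = 2) (hk : 0 < k) :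
    V000set Ω (Set.range a ∪ Set.range c)
      = ↑(Submodule.span (ZMod 2) (insert (oddSum a + c ⟨0, hk⟩) (cDiffs hk c))) := by
  subst hm2
  have hodd : oddSum a = a 0 := by
    unfold oddSum
    rw [show Finset.univ.filter (fun i : Fin 2 => (i : ℕ) % 2 = 0)
      = {(0 : Fin 2)} from by decide, Finset.sum_singleton]
  apply Set.Subset.antisymm
  · rintro y ⟨hy0, _⟩
    rw [V0_eq_even hbas hspan hm haa hac hca hcc (by omega) hk] at hy0
    exact hy0
  · intro y hy
    refine ⟨by rw [V0_eq_even hbas hspan hm haa hac hca hcc (by omega) hk]; exact hy, ?_⟩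
    obtain ⟨r, z, hz, hdec⟩ := Submodule.mem_span_insert.mp (SetLike.mem_coe.mp hy)
    rcases zmod2cases r with rfl | rfl
    · rw [zero_smul, zero_add] at hdec
      rw [hdec]
      exact pair_of_span hΩ hbas hm hac hcc hk hz
    · rw [one_smul] at hdec
      have hrepr : ∀ i : Fin 2, bas.repr (c ⟨0, hk⟩ + z) (Sum.inl i) = 0 := by
        intro i
        have h0 : c (⟨0, hk⟩ : Fin k) = bas (Sum.inr ⟨0, hk⟩) := by rw [hbas]; rfl
        rw [map_add, Finsupp.add_apply, h0, Module.Basis.repr_self, Finsupp.single_apply,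
          if_neg (by simp), span_cdiffs_repr_inl hbas hk hz, add_zero]
      obtain ⟨s, hs⟩ := sum_c_of_repr hbas hk hrepr
      refine ⟨a 0 + a ⟨1, by omega⟩, Delta_a01 hΩ hm haa,
        a ⟨1, by omega⟩ + (c ⟨0, hk⟩ + z), ?_, ?_⟩
      · rw [hs]
        exact Delta_last hΩ hm hac hcc s
      · rw [cancel2, hdec, hodd, add_assoc]
  
end Final

end S16
/-- Explicit description of `V₀`, `V₀₀` and `V₀₀₀` for a basis
`B = {a₁,…,a_m,c₁,…,c_k}` whose graph is the tree of type `D_{m,k}`. -/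
theorem stmt_16 [FiniteDimensional (ZMod 2) V]
    (Ω : BForm V) (hΩ : ∀ x : V, Ω x x = 0)
    {m k : ℕ} (hm : 2 ≤ m) (hk : 0 < k)
    (a : Fin m → V) (c : Fin k → V)
    (hli : LinearIndependent (ZMod 2) (Sum.elim a c))
    (hspan : Submodule.span (ZMod 2) (Set.range a ∪ Set.range c) = ⊤)
    (haa : ∀ i j : Fin m,
      Ω (a i) (a j) = if (i : ℕ) + 1 = (j : ℕ) ∨ (j : ℕ) + 1 = (i : ℕ) then 1 else 0)
    (hac : ∀ (i : Fin m) (j : Fin k), Ω (a i) (c j) = if (i : ℕ) + 1 = m then 1 else 0)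
    (hca : ∀ (j : Fin k) (i : Fin m), Ω (c j) (a i) = if (i : ℕ) + 1 = m then 1 else 0)
    (hcc : ∀ i j : Fin k, Ω (c i) (c j) = 0) :
    (m % 2 = 1 →
      V0set Ω = ↑(Submodule.span (ZMod 2) (cDiffs hk c)) ∧
      V000set Ω (Set.range a ∪ Set.range c) = ↑(Submodule.span (ZMod 2) (cDiffs hk c)) ∧
      (∀ Q : V → ZMod 2, IsQuadForm Ω (Set.range a ∪ Set.range c) Q →
        {y ∈ V0set Ω | Q y = 0} = ↑(Submodule.span (ZMod 2) (cDiffs hk c)))) ∧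
    (m = 2 →
      V0set Ω =
        ↑(Submodule.span (ZMod 2) (insert (a ⟨0, by omega⟩ + c ⟨0, hk⟩) (cDiffs hk c))) ∧
      V000set Ω (Set.range a ∪ Set.range c) =
        ↑(Submodule.span (ZMod 2) (insert (a ⟨0, by omega⟩ + c ⟨0, hk⟩) (cDiffs hk c))) ∧
      (∀ Q : V → ZMod 2, IsQuadForm Ω (Set.range a ∪ Set.range c) Q →
        {y ∈ V0set Ω | Q y = 0} =
          ↑(Submodule.span (ZMod 2) (insert (a ⟨0, by omega⟩ + c ⟨0, hk⟩) (cDiffs hk c))))) ∧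
    (2 < m → m % 4 = 2 →
      V000set Ω (Set.range a ∪ Set.range c) = ↑(Submodule.span (ZMod 2) (cDiffs hk c)) ∧
      V0set Ω =
        ↑(Submodule.span (ZMod 2) (insert (oddSum a + c ⟨0, hk⟩) (cDiffs hk c))) ∧
      (∀ Q : V → ZMod 2, IsQuadForm Ω (Set.range a ∪ Set.range c) Q →
        {y ∈ V0set Ω | Q y = 0} =
          ↑(Submodule.span (ZMod 2) (insert (oddSum a + c ⟨0, hk⟩) (cDiffs hk c))))) ∧
    (2 < m → m % 4 = 0 →
      V000set Ω (Set.range a ∪ Set.range c) = ↑(Submodule.span (ZMod 2) (cDiffs hk c)) ∧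
      (∀ Q : V → ZMod 2, IsQuadForm Ω (Set.range a ∪ Set.range c) Q →
        {y ∈ V0set Ω | Q y = 0} = ↑(Submodule.span (ZMod 2) (cDiffs hk c))) ∧
      V0set Ω =
        ↑(Submodule.span (ZMod 2) (insert (oddSum a + c ⟨0, hk⟩) (cDiffs hk c)))) := by
  classical
  have hsp : ⊤ ≤ Submodule.span (ZMod 2) (Set.range (Sum.elim a c)) := by
    rw [Set.Sum.elim_range, hspan]
  let bas : Module.Basis (Fin m ⊕ Fin k) (ZMod 2) V := Module.Basis.mk hli hsp
  have hbas : ⇑bas = Sum.elim a c := Module.Basis.coe_mk hli hsp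
  refine ⟨?_, ?_, ?_, ?_⟩
  · intro hmo
    exact ⟨S16.V0_eq_odd hbas hspan hm haa hac hca hcc hmo hk,
      S16.V000_odd hΩ hbas hspan hm haa hac hca hcc hmo hk,
      fun Q hQ => S16.V00_odd hbas hspan hm haa hac hca hcc hQ hmo hk⟩
  · intro hm2
    subst hm2
    have hodd : oddSum a = a 0 := by
      unfold oddSum
      rw [show Finset.univ.filter (fun i : Fin 2 => (i : ℕ) % 2 = 0)
        = {(0 : Fin 2)} from by decide, Finset.sum_singleton]
    have hrw : (a ⟨0, by omega⟩ + c ⟨0, hk⟩ : V) = oddSum a + c ⟨0, hk⟩ := by rw [hodd]; rfl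
    refine ⟨?_, ?_, ?_⟩
    · rw [hrw]
      exact S16.V0_eq_even hbas hspan hm haa hac hca hcc (by omega) hk
    · rw [hrw]
      exact S16.V000_two hΩ hbas hspan hm haa hac hca hcc rfl hk
    · intro Q hQ
      rw [hrw]
      exact S16.V00_even_Qw0 hbas hspan hm haa hac hca hcc hQ (by omega) hk
        (S16.Q_w'_two hbas hspan hm haa hac hca hcc hQ (by omega) hk)
  · intro h2 h42
    exact ⟨S16.V000_even hΩ hbas hspan hm haa hac hca hcc (by omega) h2 hk,
      S16.V0_eq_even hbas hspan hm haa hac hca hcc (by omega) hk,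
      fun Q hQ => S16.V00_even_Qw0 hbas hspan hm haa hac hca hcc hQ (by omega) hk
        (S16.Q_w'_two hbas hspan hm haa hac hca hcc hQ h42 hk)⟩
  · intro h2 h40
    exact ⟨S16.V000_even hΩ hbas hspan hm haa hac hca hcc (by omega) h2 hk,
      fun Q hQ => S16.V00_even_Qw1 hbas hspan hm haa hac hca hcc hQ (by omega) hk
        (S16.Q_w'_zero hbas hspan hm haa hac hca hcc hQ h40 hk),
      S16.V0_eq_even hbas hspan hm haa hac hca hcc (by omega) hk⟩

end DmkKernels
end
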